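/- arXiv:1611.08683 — 11 statements merged into one kernel-verified Lean document; each statement's English description precedes it below -/
import Mathlib

section
/- Let f : [0,∞) → [0,∞) be an unbounded modulus, let (X,ρ) be a metric space, let A ∈ CL(X) and let (A_k) be a sequence in CL(X) such that [WS^f]-lim A_k = A. Then (A_k) is Wijsman statistically convergent to A. -/
open Filter Metric Set
open scoped Classical

/-- A modulus: `f : [0,∞) → [0,∞)` with `f x = 0 ↔ x = 0`, subadditive,
increasing, and continuous (all on `[0,∞)`). -/
def IsModulus (f : ℝ → ℝ) : Prop :=
  (∀ x : ℝ, 0 ≤ x → 0 ≤ f x) ∧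
  (∀ x : ℝ, 0 ≤ x → (f x = 0 ↔ x = 0)) ∧
  (∀ x y : ℝ, 0 ≤ x → 0 ≤ y → f (x + y) ≤ f x + f y) ∧
  MonotoneOn f (Set.Ici 0) ∧
  ContinuousOn f (Set.Ici 0)

/-- `f` is unbounded on `[0,∞)`. -/
def IsUnboundedOn (f : ℝ → ℝ) : Prop := ∀ M : ℝ, ∃ x : ℝ, 0 ≤ x ∧ M < f x

/-- The number of elements `k ≤ n` with `k ∈ K`. -/
noncomputable def countLe (K : Set ℕ) (n : ℕ) : ℕ := Nat.card {k : ℕ | k ≤ n ∧ k ∈ K}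

/-- `K ⊆ ℕ` has `f`-density `d`: `lim_n f(|{k ≤ n : k ∈ K}|)/f(n) = d`. -/
def HasFDensity (f : ℝ → ℝ) (K : Set ℕ) (d : ℝ) : Prop :=
  Tendsto (fun n : ℕ => f (countLe K n : ℝ) / f (n : ℝ)) atTop (nhds d)

/-- `K ⊆ ℕ` has natural density `d`: `lim_n |{k ≤ n : k ∈ K}|/n = d`. -/
def HasNatDensity (K : Set ℕ) (d : ℝ) : Prop :=
  Tendsto (fun n : ℕ => (countLe K n : ℝ) / (n : ℝ)) atTop (nhds d)

/-- Wijsman convergence: `d(x, A_k) → d(x, A)` for every `x`. -/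
def WijsmanConvTo {X : Type*} [MetricSpace X] (Aseq : ℕ → Set X) (A : Set X) : Prop :=
  ∀ x : X, Tendsto (fun k : ℕ => infDist x (Aseq k)) atTop (nhds (infDist x A))

/-- Wijsman statistical convergence (with respect to the natural density). -/
def WijsmanStatConvTo {X : Type*} [MetricSpace X] (Aseq : ℕ → Set X) (A : Set X) : Prop :=
  ∀ x : X, ∀ ε : ℝ, 0 < ε →
    HasNatDensity {k : ℕ | ε ≤ |infDist x (Aseq k) - infDist x A|} 0

/-- `f`-Wijsman statistical convergence: `[WS^f]-lim A_k = A`. -/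
def FWijsmanStatConvTo (f : ℝ → ℝ) {X : Type*} [MetricSpace X]
    (Aseq : ℕ → Set X) (A : Set X) : Prop :=
  ∀ x : X, ∀ ε : ℝ, 0 < ε →
    HasFDensity f {k : ℕ | ε ≤ |infDist x (Aseq k) - infDist x A|} 0

/-- Wijsman boundedness: `sup_k d(x, A_k) < ∞` for every `x`. -/
def WijsmanBounded {X : Type*} [MetricSpace X] (Aseq : ℕ → Set X) : Prop :=
  ∀ x : X, ∃ M : ℝ, ∀ k : ℕ, infDist x (Aseq k) ≤ M

/-- Wijsman Cesàro summability to `A`. -/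
def WijsmanCesaroTo {X : Type*} [MetricSpace X] (Aseq : ℕ → Set X) (A : Set X) : Prop :=
  ∀ x : X, Tendsto (fun n : ℕ => (∑ k ∈ Finset.range n, infDist x (Aseq k)) / (n : ℝ))
    atTop (nhds (infDist x A))

/-- Wijsman strong Cesàro summability to `A` with respect to a modulus `f`:
`[Ww^f]-lim A_k = A`. -/
def WijsmanStrongCesaroTo (f : ℝ → ℝ) {X : Type*} [MetricSpace X]
    (Aseq : ℕ → Set X) (A : Set X) : Prop :=
  ∀ x : X, Tendsto
    (fun n : ℕ => (∑ k ∈ Finset.range n, f |infDist x (Aseq k) - infDist x A|) / (n : ℝ))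
    atTop (nhds 0)

/-- A slowly varying modulus: `lim_{x→∞} f(ax)/f(x) = 1` for every `a > 0`. -/
def SlowlyVaryingOn (f : ℝ → ℝ) : Prop :=
  ∀ a : ℝ, 0 < a → Tendsto (fun x : ℝ => f (a * x) / f x) atTop (nhds 1)

lemma fdensity_zero_imp_natdensity_zero (f : ℝ → ℝ) (hf : IsModulus f)
    (hfu : IsUnboundedOn f) (K : Set ℕ) (h : HasFDensity f K 0) :
    HasNatDensity K 0 := by
  obtain ⟨hpos, hzero, hsub, hmono, _⟩ := hf
  have hiter : ∀ p : ℕ, ∀ x : ℝ, 0 ≤ x → f (p * x) ≤ p * f x := by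
    intro p
    induction p with
    | zero => intro x hx; simp [(hzero 0 le_rfl).mpr rfl]
    | succ q ih =>
      intro x hx
      have heq : ((q + 1 : ℕ) : ℝ) * x = q * x + x := by push_cast; ring
      rw [heq]
      calc f (q * x + x) ≤ f (q * x) + f x := hsub _ _ (by positivity) hx
        _ ≤ q * f x + f x := by linarith [ih x hx]
        _ = ((q + 1 : ℕ) : ℝ) * f x := by push_cast; ring
  obtain ⟨x0, hx0, hfx0⟩ := hfu 0
  rw [HasNatDensity, Metric.tendsto_atTop]
  intro ε hε
  obtain ⟨p, hp⟩ := exists_nat_one_div_lt hε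
  have hp0 : (0 : ℝ) < (p : ℝ) + 1 := by positivity
  rw [HasFDensity, Metric.tendsto_atTop] at h
  obtain ⟨N1, hN1⟩ := h (1 / ((p : ℝ) + 1)) (by positivity)
  refine ⟨max N1 (⌈x0⌉₊ + 1), fun n hn => ?_⟩
  have hn1 : N1 ≤ n := le_trans (le_max_left _ _) hn
  have hn0 : ⌈x0⌉₊ + 1 ≤ n := le_trans (le_max_right _ _) hn
  have hnpos : 0 < n := lt_of_lt_of_le (Nat.succ_pos _) hn0
  have hnR : (0 : ℝ) < n := by exact_mod_cast hnpos
  have hfn : 0 < f n := by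
    have hx0n : x0 ≤ (n : ℝ) := le_trans (Nat.le_ceil x0)
      (by exact_mod_cast Nat.le_of_succ_le hn0)
    have := hmono (Set.mem_Ici.mpr hx0) (Set.mem_Ici.mpr (le_trans hx0 hx0n)) hx0n
    linarith
  have hcnonneg : (0 : ℝ) ≤ (countLe K n : ℝ) := by positivity
  have hcount : (countLe K n : ℝ) < n / ((p : ℝ) + 1) := by
    by_contra hc
    push_neg at hc
    have hle : f (n : ℝ) ≤ ((p : ℝ) + 1) * f (countLe K n : ℝ) := by
      have h1 : ((p : ℝ) + 1) * ((n : ℝ) / ((p : ℝ) + 1)) = n := by field_simp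
      have h2 : f (n : ℝ) = f (((p + 1 : ℕ) : ℝ) * ((n : ℝ) / ((p : ℝ) + 1))) := by
        push_cast; rw [h1]
      rw [h2]
      calc f (((p + 1 : ℕ) : ℝ) * ((n : ℝ) / ((p : ℝ) + 1)))
          ≤ ((p + 1 : ℕ) : ℝ) * f ((n : ℝ) / ((p : ℝ) + 1)) :=
            hiter (p + 1) _ (by positivity)
        _ ≤ ((p : ℝ) + 1) * f (countLe K n : ℝ) := by
            have hm := hmono (Set.mem_Ici.mpr (by positivity : (0 : ℝ) ≤ (n : ℝ) / ((p : ℝ) + 1)))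
              (Set.mem_Ici.mpr hcnonneg) hc
            push_cast
            nlinarith
    have hd := hN1 n hn1
    rw [Real.dist_eq, sub_zero,
      abs_of_nonneg (div_nonneg (hpos _ hcnonneg) hfn.le)] at hd
    rw [div_lt_div_iff₀ hfn hp0] at hd
    nlinarith
  rw [Real.dist_eq, sub_zero, abs_of_nonneg (by positivity)]
  calc (countLe K n : ℝ) / n < (n / ((p : ℝ) + 1)) / n :=
        (div_lt_div_iff_of_pos_right hnR).mpr hcount
    _ = 1 / ((p : ℝ) + 1) := by field_simp
    _ < ε := hp

/-- If `[WS^f]-lim A_k = A` for an unbounded modulus `f`, then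
`(A_k)` is Wijsman statistically convergent to `A`. -/
theorem stmt0 {X : Type*} [MetricSpace X] (f : ℝ → ℝ)
    (hf : IsModulus f) (hfu : IsUnboundedOn f)
    (A : Set X) (hA : A.Nonempty) (hAcl : IsClosed A)
    (Aseq : ℕ → Set X) (hAseq : ∀ k, (Aseq k).Nonempty ∧ IsClosed (Aseq k))
    (h : FWijsmanStatConvTo f Aseq A) :
    WijsmanStatConvTo Aseq A := fun x ε hε =>
  fdensity_zero_imp_natdensity_zero f hf hfu _ (h x ε hε)
end

section
/- Let (X,ρ) be a metric space and let f, g be unbounded moduli. Then for all A, B ∈ CL(X) and every sequence (A_k) in CL(X), the equalities [WS^f]-lim A_k = A and [WS^g]-lim A_k = B imply A = B. -/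
open Filter Metric Set
open scoped Classical

/-!
If the `f`-limit `A` and the `g`-limit `B` had `d(x, A) ≠ d(x, B)` for some `x`, then with
`ε = |d(x, A) - d(x, B)| / 2` the triangle inequality puts every `k` into one of the two
exceptional sets, of `f`- and `g`-density zero respectively. But a set of modulus density zero
eventually contains fewer than half of `{0, …, n}` (subadditivity gives `f n ≤ 2 f m` when
`n ≤ 2 m`), so two such sets cannot cover `ℕ`. Closed sets are determined by their distance
functions, hence `A = B`.
-/

lemma countLe_eq_card_filter (K : Set ℕ) (n : ℕ) :
    countLe K n = ((Finset.range (n + 1)).filter (· ∈ K)).card := by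
  rw [countLe, ← Nat.card_eq_finsetCard]
  congr! 2
  ext k
  simp

lemma succ_le_countLe_add_countLe {K K' : Set ℕ} (hcover : ∀ k, k ∈ K ∨ k ∈ K') (n : ℕ) :
    n + 1 ≤ countLe K n + countLe K' n := by
  rw [countLe_eq_card_filter, countLe_eq_card_filter]
  calc n + 1 = (Finset.range (n + 1)).card := (Finset.card_range _).symm
    _ ≤ ((Finset.range (n + 1)).filter (· ∈ K) ∪ (Finset.range (n + 1)).filter (· ∈ K')).card :=
        Finset.card_le_card fun k hk => by
          rw [← Finset.filter_or, Finset.mem_filter]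
          exact ⟨hk, hcover k⟩
    _ ≤ _ := Finset.card_union_le _ _

lemma IsModulus.pos {f : ℝ → ℝ} (hf : IsModulus f) {x : ℝ} (hx : 0 < x) : 0 < f x :=
  (hf.1 x hx.le).lt_of_ne fun h => hx.ne' ((hf.2.1 x hx.le).mp h.symm)

lemma IsModulus.le_two_mul {f : ℝ → ℝ} (hf : IsModulus f) {x y : ℝ} (hx : 0 ≤ x)
    (hy : 0 ≤ y) (hxy : x ≤ 2 * y) : f x ≤ 2 * f y :=
  calc f x ≤ f (y + y) := hf.2.2.2.1 hx (by simpa using add_nonneg hy hy) (by linarith)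
    _ ≤ 2 * f y := by linarith [hf.2.2.1 y y hy hy]

lemma HasFDensity.eventually_two_mul_countLe_lt {f : ℝ → ℝ} (hf : IsModulus f) {K : Set ℕ}
    (hK : HasFDensity f K 0) : ∀ᶠ n : ℕ in atTop, 2 * countLe K n < n := by
  filter_upwards [hK.eventually (eventually_lt_nhds one_half_pos), eventually_gt_atTop 0]
    with n hratio hn
  by_contra! hle
  have hfn : 0 < f n := hf.pos (Nat.cast_pos.mpr hn)
  have : f n ≤ 2 * f (countLe K n) :=
    hf.le_two_mul n.cast_nonneg (Nat.cast_nonneg _) (by exact_mod_cast hle)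
  rw [div_lt_iff₀ hfn] at hratio
  linarith

lemma exists_notMem_of_hasFDensity_zero {f g : ℝ → ℝ} (hf : IsModulus f) (hg : IsModulus g)
    {K K' : Set ℕ} (hK : HasFDensity f K 0) (hK' : HasFDensity g K' 0) :
    ∃ k, k ∉ K ∧ k ∉ K' := by
  obtain ⟨n, hn, hn'⟩ := (hK.eventually_two_mul_countLe_lt hf |>.and
    (hK'.eventually_two_mul_countLe_lt hg)).exists
  by_contra! hcover
  have := succ_le_countLe_add_countLe (fun k => or_iff_not_imp_left.mpr (hcover k)) n
  omega

theorem stmt1_general {X : Type*} [MetricSpace X] (f g : ℝ → ℝ)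
    (hf : IsModulus f)
    (hg : IsModulus g)
    (A B : Set X) (hA : A.Nonempty) (hAcl : IsClosed A)
    (hB : B.Nonempty) (hBcl : IsClosed B)
    (Aseq : ℕ → Set X)
    (hfA : FWijsmanStatConvTo f Aseq A) (hgB : FWijsmanStatConvTo g Aseq B) :
    A = B := by
  have hdist : ∀ x : X, infDist x A = infDist x B := by
    intro x
    by_contra hne
    set ε := |infDist x A - infDist x B| / 2 with hε_def
    have hε : 0 < ε := half_pos (abs_pos.mpr (sub_ne_zero.mpr hne))
    obtain ⟨k, hkA, hkB⟩ := exists_notMem_of_hasFDensity_zero hf hg (hfA x ε hε) (hgB x ε hε)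
    simp only [Set.mem_ofPred_eq, not_le] at hkA hkB
    have := abs_sub_le (infDist x A) (infDist x (Aseq k)) (infDist x B)
    rw [abs_sub_comm (infDist x A) (infDist x (Aseq k))] at this
    linarith
  ext y
  rw [hAcl.mem_iff_infDist_zero hA, hBcl.mem_iff_infDist_zero hB, hdist y]

/-- `[WS^f]-lim A_k = A` and `[WS^g]-lim A_k = B` imply `A = B`. -/
theorem stmt1 {X : Type*} [MetricSpace X] (f g : ℝ → ℝ)
    (hf : IsModulus f) (hfu : IsUnboundedOn f)
    (hg : IsModulus g) (hgu : IsUnboundedOn g)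
    (A B : Set X) (hA : A.Nonempty) (hAcl : IsClosed A)
    (hB : B.Nonempty) (hBcl : IsClosed B)
    (Aseq : ℕ → Set X) (hAseq : ∀ k, (Aseq k).Nonempty ∧ IsClosed (Aseq k))
    (hfA : FWijsmanStatConvTo f Aseq A) (hgB : FWijsmanStatConvTo g Aseq B) :
    A = B :=
  stmt1_general f g hf hg A B hA hAcl hB hBcl Aseq hfA hgB
end

section
/- Let K be an infinite subset of ℕ. Then there exists an unbounded modulus f : [0,∞) → [0,∞) which is concave on [0,∞), slowly varying, and satisfies d^f(K) = 1. -/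
open Filter Metric Set
open scoped Classical

/-!
Choose `M 0 = 0 < M 1 < ⋯` with `M k ^ 2 < M (k + 1)` and so fast that `K` has at least `M k`
elements up to `M (k + 1)`, and let `f` be the piecewise-linear function with `f (M k) = k`.
The gaps of `M` increase, so `f` is concave, hence a modulus. On `[M j, M (j + 2)]` the function
`f` varies by at most `2`; for large `x` this window contains both `x` and `b * x`, and for large
`n` both `n` and `|K ∩ [0, n]|`. As `f → ∞`, both ratios tend to `1`.
-/

open Asymptotics

lemma ConcaveOn.mul_le_map_mul {f : ℝ → ℝ} (hf : ConcaveOn ℝ (Ici 0) f) (h0 : 0 ≤ f 0)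
    {t x : ℝ} (ht₀ : 0 ≤ t) (ht₁ : t ≤ 1) (hx : 0 ≤ x) : t * f x ≤ f (t * x) := by
  have := hf.2 (mem_Ici.2 le_rfl) hx (sub_nonneg.2 ht₁) ht₀ (sub_add_cancel 1 t)
  simp only [smul_eq_mul, mul_zero, zero_add] at this
  nlinarith

lemma ConcaveOn.map_add_le {f : ℝ → ℝ} (hf : ConcaveOn ℝ (Ici 0) f) (h0 : 0 ≤ f 0)
    {x y : ℝ} (hx : 0 ≤ x) (hy : 0 ≤ y) : f (x + y) ≤ f x + f y := by
  rcases (add_nonneg hx hy).eq_or_lt with hxy | hxy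
  · obtain ⟨rfl, rfl⟩ := (add_eq_zero_iff_of_nonneg hx hy).1 hxy.symm
    simpa using h0
  have hscale {z : ℝ} (hz : 0 ≤ z) (hzs : z ≤ x + y) : z / (x + y) * f (x + y) ≤ f z := by
    simpa [div_mul_cancel₀ z hxy.ne'] using
      hf.mul_le_map_mul h0 (div_nonneg hz hxy.le) ((div_le_one hxy).2 hzs) hxy.le
  have := add_le_add (hscale hx (by linarith)) (hscale hy (by linarith))
  rwa [← add_mul, ← add_div, div_self hxy.ne', one_mul] at this

lemma concaveOn_ciInf {ι E : Type*} [Nonempty ι] [AddCommGroup E] [Module ℝ E] {s : Set E}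
    {f : ι → E → ℝ} (hf : ∀ i, ConcaveOn ℝ s (f i))
    (hbdd : ∀ x ∈ s, BddBelow (range fun i => f i x)) :
    ConcaveOn ℝ s fun x => ⨅ i, f i x := by
  refine ⟨(hf (Classical.arbitrary ι)).1, fun x hx y hy a b ha hb hab => le_ciInf fun i => ?_⟩
  dsimp only
  calc a • (⨅ i, f i x) + b • ⨅ i, f i y ≤ a • f i x + b • f i y := by
        gcongr
        exacts [ciInf_le (hbdd x hx) i, ciInf_le (hbdd y hy) i]
    _ ≤ f i (a • x + b • y) := (hf i).2 hx hy ha hb hab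

lemma tendsto_div_nhds_one_of_abs_sub_le {α : Type*} {l : Filter α} {F G : α → ℝ} {C : ℝ}
    (hF : Tendsto F l atTop) (h : ∀ᶠ x in l, |G x - F x| ≤ C) :
    Tendsto (fun x => G x / F x) l (nhds 1) := by
  have hbig : (G - F) =O[l] (fun _ => (1 : ℝ)) :=
    IsBigO.of_bound C (h.mono fun x hx => by simpa using hx)
  have hsmall : (fun _ => (1 : ℝ)) =o[l] F :=
    (isLittleO_one_left_iff ℝ).2 (tendsto_abs_atTop_atTop.comp hF)
  exact (isEquivalent_iff_tendsto_one (hF.eventually_ne_atTop 0)).1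
    (hbig.trans_isLittleO hsmall)

lemma slowlyVaryingOn_of_map_mul_le {f : ℝ → ℝ} (hmono : Monotone f)
    (htop : Tendsto f atTop atTop) {C : ℝ}
    (h : ∀ b, 1 ≤ b → ∀ᶠ x in atTop, f (b * x) ≤ f x + C) : SlowlyVaryingOn f := by
  intro a ha
  refine tendsto_div_nhds_one_of_abs_sub_le (C := C) htop ?_
  rcases le_or_gt 1 a with h1 | h1
  · filter_upwards [h a h1, eventually_ge_atTop 0] with x hx hx0
    have : f x ≤ f (a * x) := hmono (le_mul_of_one_le_left hx0 h1)
    rw [abs_le]; constructor <;> linarith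
  · have hinv :=
      (tendsto_id.const_mul_atTop ha).eventually (h a⁻¹ (one_le_inv₀ ha |>.2 h1.le))
    filter_upwards [hinv, eventually_ge_atTop 0] with x hx hx0
    rw [id, inv_mul_cancel_left₀ ha.ne'] at hx
    have : f (a * x) ≤ f x := hmono (mul_le_of_le_one_left hx0 h1.le)
    rw [abs_le]; constructor <;> linarith

lemma countLe_eq_count (K : Set ℕ) (n : ℕ) : countLe K n = Nat.count (· ∈ K) (n + 1) := by
  rw [countLe, Nat.card_coe_set_eq, Nat.count_eq_card_filter_range, ← Set.ncard_coe_finset]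
  congr 1
  ext k
  simp

lemma countLe_le (K : Set ℕ) (n : ℕ) : countLe K n ≤ n + 1 :=
  countLe_eq_count K n ▸ Nat.count_le _

lemma tendsto_countLe_atTop {K : Set ℕ} (hK : K.Infinite) : Tendsto (countLe K) atTop atTop := by
  refine tendsto_atTop_atTop_of_monotone (fun m n hmn => ?_) fun m => ⟨Nat.nth (· ∈ K) m, ?_⟩
  · simpa only [countLe_eq_count] using Nat.count_monotone _ (Nat.succ_le_succ hmn)
  · rw [countLe_eq_count]
    calc m = Nat.count (· ∈ K) (Nat.nth (· ∈ K) m) :=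
          (Nat.count_nth_of_infinite (p := (· ∈ K)) hK m).symm
      _ ≤ _ := Nat.count_monotone _ (Nat.le_succ _)

structure SquareGrowth (M : ℕ → ℕ) : Prop where
  zero : M 0 = 0
  sq_lt : ∀ k, M k ^ 2 < M (k + 1)

lemma exists_squareGrowth_le {c : ℕ → ℕ} (hc : Tendsto c atTop atTop) :
    ∃ M, SquareGrowth M ∧ ∀ k n, M (k + 1) ≤ n → M k ≤ c n := by
  choose N hN using fun m => eventually_atTop.1 (hc.eventually_ge_atTop m)
  let M : ℕ → ℕ := fun k => Nat.rec 0 (fun _ m => max (m ^ 2 + 1) (N m)) k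
  refine ⟨M, ⟨rfl, fun k => Nat.lt_of_succ_le (le_max_left _ _)⟩, fun k n hn => ?_⟩
  exact hN (M k) n ((le_max_right _ _).trans hn)

noncomputable def gap (M : ℕ → ℕ) (k : ℕ) : ℝ := M (k + 1) - M k

noncomputable def secant (M : ℕ → ℕ) (k : ℕ) (x : ℝ) : ℝ := k + (x - M k) / gap M k

/-- When the gaps of `M` increase, this is the piecewise-linear function through the points
`(M k, k)`: the lower envelope of the lines through consecutive points. -/
noncomputable def piecewiseLinearInv (M : ℕ → ℕ) (x : ℝ) : ℝ := ⨅ k, secant M k x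

lemma concaveOn_secant (M : ℕ → ℕ) (k : ℕ) : ConcaveOn ℝ univ (secant M k) := by
  refine ⟨convex_univ, fun x _ y _ a b _ _ hab => le_of_eq ?_⟩
  obtain rfl : b = 1 - a := by linarith
  simp only [secant, smul_eq_mul]
  ring

namespace SquareGrowth

variable {M : ℕ → ℕ} (hM : SquareGrowth M)
include hM

lemma lt_succ (k : ℕ) : M k < M (k + 1) :=
  (Nat.le_self_pow two_ne_zero _).trans_lt (hM.sq_lt k)

lemma strictMono : StrictMono M := strictMono_nat_of_lt_succ hM.lt_succ

lemma two_mul_le (k : ℕ) : 2 * M k ≤ M (k + 1) := by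
  have := hM.sq_lt k
  nlinarith [sq_nonneg ((M k : ℤ) - 1)]

lemma one_le_gap (k : ℕ) : 1 ≤ gap M k := by
  have : (M k : ℝ) + 1 ≤ M (k + 1) := by exact_mod_cast hM.lt_succ k
  rw [gap]; linarith

lemma gap_pos (k : ℕ) : 0 < gap M k := one_pos.trans_le (hM.one_le_gap k)

lemma apply_le_gap (k : ℕ) : (M k : ℝ) ≤ gap M k := by
  have : 2 * (M k : ℝ) ≤ M (k + 1) := by exact_mod_cast hM.two_mul_le k
  rw [gap]; linarith

lemma gap_mono : Monotone (gap M) := by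
  refine monotone_nat_of_le_succ fun k => ?_
  have := hM.apply_le_gap (k + 1)
  simp only [gap] at this ⊢
  have : (0 : ℝ) ≤ M k := Nat.cast_nonneg _
  linarith

lemma sub_mul_gap_le (j k : ℕ) : ((j : ℝ) - k) * gap M k ≤ M j - M k := by
  rcases le_or_gt k j with hkj | hjk
  · induction j, hkj using Nat.le_induction with
    | base => simp
    | succ j hkj ih =>
      have : gap M k ≤ gap M j := hM.gap_mono hkj
      have hj : gap M j = M (j + 1) - M j := rfl
      push_cast
      linarith
  · have hjk : (j : ℝ) + 1 ≤ k := by exact_mod_cast hjk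
    have := hM.apply_le_gap k
    have := hM.gap_pos k
    have : (0 : ℝ) ≤ M j := Nat.cast_nonneg _
    nlinarith

lemma min_sub_one_le_secant (k : ℕ) (x : ℝ) : min x 0 - 1 ≤ secant M k x := by
  have hg := hM.gap_pos k
  have : min x 0 - 1 ≤ (x - M k) / gap M k := by
    rw [le_div_iff₀ hg]
    have := hM.one_le_gap k
    have := hM.apply_le_gap k
    rcases le_total x 0 with hx | hx
    · rw [min_eq_left hx]; nlinarith
    · rw [min_eq_right hx]; nlinarith
  have : (0 : ℝ) ≤ k := Nat.cast_nonneg k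
  rw [secant]; linarith

lemma bddBelow_secant (x : ℝ) : BddBelow (range fun k => secant M k x) :=
  ⟨min x 0 - 1, forall_mem_range.2 fun k => hM.min_sub_one_le_secant k x⟩

lemma piecewiseLinearInv_le_secant (k : ℕ) (x : ℝ) : piecewiseLinearInv M x ≤ secant M k x :=
  ciInf_le (hM.bddBelow_secant x) k

lemma concaveOn : ConcaveOn ℝ univ (piecewiseLinearInv M) :=
  concaveOn_ciInf (concaveOn_secant M) fun x _ => hM.bddBelow_secant x

lemma monotone : Monotone (piecewiseLinearInv M) := fun x y hxy =>
  ciInf_mono (hM.bddBelow_secant x) fun k => by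
    have := hM.gap_pos k
    rw [secant, secant]
    gcongr

lemma piecewiseLinearInv_le_of_le {x : ℝ} {k : ℕ} (hx : x ≤ M k) :
    piecewiseLinearInv M x ≤ k := by
  refine (hM.piecewiseLinearInv_le_secant k x).trans ?_
  rw [secant, add_le_iff_nonpos_right]
  exact div_nonpos_of_nonpos_of_nonneg (sub_nonpos.2 hx) (hM.gap_pos k).le

lemma le_piecewiseLinearInv_of_le {x : ℝ} {j : ℕ} (hx : (M j : ℝ) ≤ x) :
    (j : ℝ) ≤ piecewiseLinearInv M x := by
  refine le_trans (le_ciInf fun k => ?_) (hM.monotone hx)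
  rw [secant, ← sub_le_iff_le_add', le_div_iff₀ (hM.gap_pos k)]
  exact hM.sub_mul_gap_le j k

lemma piecewiseLinearInv_zero : piecewiseLinearInv M 0 = 0 := by
  refine le_antisymm ?_ ?_
  · simpa using hM.piecewiseLinearInv_le_of_le (k := 0) (by simp [hM.zero])
  · simpa using hM.le_piecewiseLinearInv_of_le (j := 0) (by simp [hM.zero])

lemma piecewiseLinearInv_pos {x : ℝ} (hx : 0 < x) : 0 < piecewiseLinearInv M x := by
  have hM1 : (0 : ℝ) < M 1 := by exact_mod_cast hM.zero ▸ hM.lt_succ 0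
  set t := min (x / M 1) 1
  have ht : 0 < t := lt_min (div_pos hx hM1) one_pos
  have htx : t * M 1 ≤ x := (mul_le_mul_of_nonneg_right (min_le_left _ _) hM1.le).trans
    (div_mul_cancel₀ x hM1.ne').le
  calc 0 < t * 1 := by simpa using ht
    _ ≤ t * piecewiseLinearInv M (M 1) := by
        gcongr; exact_mod_cast hM.le_piecewiseLinearInv_of_le (j := 1) le_rfl
    _ ≤ piecewiseLinearInv M (t * M 1) :=
        (hM.concaveOn.subset (subset_univ _) (convex_Ici 0)).mul_le_map_mul
          hM.piecewiseLinearInv_zero.ge ht.le (min_le_right _ _) hM1.le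
    _ ≤ piecewiseLinearInv M x := hM.monotone htx

lemma tendsto_atTop : Tendsto (piecewiseLinearInv M) atTop atTop :=
  Filter.tendsto_atTop.2 fun b => eventually_atTop.2
    ⟨M ⌈b⌉₊, fun _ hx => (Nat.le_ceil b).trans (hM.le_piecewiseLinearInv_of_le hx)⟩

lemma exists_apply_le_lt {x : ℝ} (hx : 0 ≤ x) : ∃ j, (M j : ℝ) ≤ x ∧ x < M (j + 1) := by
  have hex : ∃ j, x < M (j + 1) := ⟨⌈x⌉₊, (Nat.le_ceil x).trans_lt <| by
    exact_mod_cast (Nat.lt_succ_self _).trans_le (hM.strictMono.id_le _)⟩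
  refine ⟨Nat.find hex, ?_, Nat.find_spec hex⟩
  rcases hj : Nat.find hex with _ | i
  · simpa [hM.zero] using hx
  · exact not_lt.1 (Nat.find_min hex (hj ▸ Nat.lt_succ_self i))

lemma abs_sub_le_two {x y : ℝ} {j : ℕ} (hx : (M j : ℝ) ≤ x) (hx' : x ≤ M (j + 2))
    (hy : (M j : ℝ) ≤ y) (hy' : y ≤ M (j + 2)) :
    |piecewiseLinearInv M x - piecewiseLinearInv M y| ≤ 2 := by
  have := hM.le_piecewiseLinearInv_of_le hx
  have := hM.le_piecewiseLinearInv_of_le hy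
  have := hM.piecewiseLinearInv_le_of_le hx'
  have := hM.piecewiseLinearInv_le_of_le hy'
  push_cast at *
  rw [abs_le]; constructor <;> linarith

/-- Because `M (j + 1) ^ 2 < M (j + 2)`, scaling by `b ≤ M (j + 1)` moves a point of
`[M j, M (j + 1))` at most two steps up. -/
lemma eventually_map_mul_le {b : ℝ} (hb : 1 ≤ b) :
    ∀ᶠ x in atTop, piecewiseLinearInv M (b * x) ≤ piecewiseLinearInv M x + 2 := by
  filter_upwards [eventually_ge_atTop (M ⌈b⌉₊ : ℝ)] with x hx
  have hx0 : 0 ≤ x := (Nat.cast_nonneg _).trans hx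
  obtain ⟨j, hjx, hxj⟩ := hM.exists_apply_le_lt hx0
  have hbj : b ≤ M (j + 1) := by
    have : ⌈b⌉₊ ≤ j + 1 := by
      by_contra! h
      have : M (j + 1) ≤ M ⌈b⌉₊ := hM.strictMono.monotone h.le
      have : (M (j + 1) : ℝ) ≤ M ⌈b⌉₊ := by exact_mod_cast this
      linarith
    exact (Nat.le_ceil b).trans (by exact_mod_cast this.trans (hM.strictMono.id_le _))
  have hbx : b * x ≤ M (j + 2) := by
    have : (M (j + 1) : ℝ) ^ 2 ≤ M (j + 2) := by exact_mod_cast (hM.sq_lt (j + 1)).le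
    nlinarith
  have := hM.le_piecewiseLinearInv_of_le hjx
  have := hM.piecewiseLinearInv_le_of_le hbx
  push_cast at *
  linarith

lemma slowlyVaryingOn : SlowlyVaryingOn (piecewiseLinearInv M) :=
  slowlyVaryingOn_of_map_mul_le hM.monotone hM.tendsto_atTop fun _ => hM.eventually_map_mul_le

lemma isModulus : IsModulus (piecewiseLinearInv M) := by
  have hconc : ConcaveOn ℝ (Ici 0) (piecewiseLinearInv M) :=
    hM.concaveOn.subset (subset_univ _) (convex_Ici 0)
  refine ⟨fun x hx => hM.piecewiseLinearInv_zero ▸ hM.monotone hx, fun x hx => ⟨fun h => ?_,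
    fun h => h ▸ hM.piecewiseLinearInv_zero⟩,
    fun x y hx hy => hconc.map_add_le hM.piecewiseLinearInv_zero.ge hx hy,
    hM.monotone.monotoneOn _, (hM.concaveOn.continuousOn isOpen_univ).mono (subset_univ _)⟩
  by_contra hx0
  exact (hM.piecewiseLinearInv_pos (hx.lt_of_ne' hx0)).ne' h

lemma isUnboundedOn : IsUnboundedOn (piecewiseLinearInv M) := fun B =>
  ((hM.tendsto_atTop.eventually_gt_atTop B).and (eventually_ge_atTop 0)).exists.imp
    fun _ hx => ⟨hx.2, hx.1⟩

lemma hasFDensity_one {K : Set ℕ} (hK : ∀ k n, M (k + 1) ≤ n → M k ≤ countLe K n) :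
    HasFDensity (piecewiseLinearInv M) K 1 := by
  refine tendsto_div_nhds_one_of_abs_sub_le (C := 2)
    (hM.tendsto_atTop.comp tendsto_natCast_atTop_atTop) ?_
  filter_upwards [eventually_ge_atTop (M 1)] with n hn
  obtain ⟨j, hjn, hnj⟩ := hM.exists_apply_le_lt (Nat.cast_nonneg (α := ℝ) n)
  have hjn : M j ≤ n := by exact_mod_cast hjn
  have hnj : n + 1 ≤ M (j + 1) := by exact_mod_cast hnj
  obtain ⟨i, rfl⟩ : ∃ i, j = i + 1 := Nat.exists_eq_add_one.2 <|
    Nat.succ_lt_succ_iff.1 (hM.strictMono.lt_iff_lt.1 (hn.trans_lt (Nat.lt_of_succ_le hnj)))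
  apply hM.abs_sub_le_two (j := i)
  · exact_mod_cast hK i n hjn
  · exact_mod_cast (countLe_le K n).trans hnj
  · exact_mod_cast (hM.strictMono.monotone (Nat.le_succ i)).trans hjn
  · exact_mod_cast (Nat.le_succ n).trans hnj

end SquareGrowth

/-- For every infinite `K ⊆ ℕ` there is an unbounded, concave,
slowly varying modulus `f` with `d^f(K) = 1`. -/
theorem stmt3 (K : Set ℕ) (hK : K.Infinite) :
    ∃ f : ℝ → ℝ, IsModulus f ∧ IsUnboundedOn f ∧ ConcaveOn ℝ (Set.Ici 0) f ∧
      SlowlyVaryingOn f ∧ HasFDensity f K 1 := by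
  obtain ⟨M, hM, hMK⟩ := exists_squareGrowth_le (tendsto_countLe_atTop hK)
  exact ⟨piecewiseLinearInv M, hM.isModulus, hM.isUnboundedOn,
    hM.concaveOn.subset (subset_univ _) (convex_Ici 0), hM.slowlyVaryingOn,
    hM.hasFDensity_one hMK⟩
end

section
/- Let (X,ρ) be a metric space, let A ∈ CL(X) and let (A_k) be a sequence in CL(X). If (A_k) is Wijsman bounded and Wijsman statistically convergent to A, then (A_k) is Wijsman Cesàro summable to A. -/
open Filter Metric Set
open scoped Classical

/-! Split the Cesàro mean of `|d(x, A_k) - d(x, A)|` at the set where this term is at least `ε`: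
that set has density tending to `0` and its terms are bounded, while the remaining terms are
below `ε`. -/

open Finset in
lemma card_filter_range_le_countLe (K : Set ℕ) (n : ℕ) :
    #{k ∈ range n | k ∈ K} ≤ countLe K n := by
  have hset : {k : ℕ | k ≤ n ∧ k ∈ K} = ↑({k ∈ range (n + 1) | k ∈ K}) := by
    ext k; simp
  rw [countLe, hset, Nat.card_coe_set_eq, Set.ncard_coe_finset]
  exact card_le_card (filter_subset_filter _ (range_subset_range.mpr n.le_succ))

open Finset in
lemma sum_range_abs_le_countLe_mul_add {b : ℕ → ℝ} {C ε : ℝ} (hC : ∀ k, |b k| ≤ C)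
    (hε : 0 ≤ ε) (n : ℕ) :
    ∑ k ∈ range n, |b k| ≤ countLe {k | ε ≤ |b k|} n * C + n * ε := by
  set K : Set ℕ := {k | ε ≤ |b k|}
  have hC0 : 0 ≤ C := (abs_nonneg _).trans (hC 0)
  have hterm : ∀ k, |b k| ≤ C * (if k ∈ K then 1 else 0) + ε := by
    intro k
    by_cases hk : k ∈ K
    · simp only [hk, if_true, mul_one]; linarith [hC k]
    · simp only [hk, if_false, mul_zero, zero_add]
      exact (not_le.mp hk).le
  calc ∑ k ∈ range n, |b k| ≤ ∑ k ∈ range n, (C * (if k ∈ K then 1 else 0) + ε) :=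
        sum_le_sum fun k _ => hterm k
    _ = #{k ∈ range n | k ∈ K} * C + n * ε := by
        rw [sum_add_distrib, ← mul_sum, sum_boole, sum_const, card_range, nsmul_eq_mul]
        ring
    _ ≤ countLe K n * C + n * ε := by
        gcongr
        exact_mod_cast card_filter_range_le_countLe K n

theorem tendsto_cesaro_abs_of_bounded_of_hasNatDensity {b : ℕ → ℝ} {C : ℝ}
    (hC : ∀ k, |b k| ≤ C) (hd : ∀ ε : ℝ, 0 < ε → HasNatDensity {k | ε ≤ |b k|} 0) :
    Tendsto (fun n : ℕ => (∑ k ∈ Finset.range n, |b k|) / n) atTop (nhds 0) := by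
  refine tendsto_order.2 ⟨fun a ha => Eventually.of_forall fun n => ?_, fun a ha => ?_⟩
  · exact ha.trans_le (by positivity)
  have hsmall : ∀ᶠ n : ℕ in atTop, countLe {k | a / 2 ≤ |b k|} n / (n : ℝ) * C < a / 2 := by
    have hlim := (hd (a / 2) (half_pos ha)).mul_const C
    rw [zero_mul] at hlim
    exact (tendsto_order.1 hlim).2 _ (half_pos ha)
  filter_upwards [hsmall, eventually_gt_atTop 0] with n hn hn0
  have hn0' : (0 : ℝ) < n := by exact_mod_cast hn0
  calc (∑ k ∈ Finset.range n, |b k|) / n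
      ≤ (countLe {k | a / 2 ≤ |b k|} n * C + n * (a / 2)) / n := by
        gcongr
        exact sum_range_abs_le_countLe_mul_add hC (half_pos ha).le n
    _ = countLe {k | a / 2 ≤ |b k|} n / (n : ℝ) * C + a / 2 := by
        field_simp
    _ < a := by linarith

theorem tendsto_cesaro_of_tendsto_cesaro_abs_sub {a : ℕ → ℝ} {L : ℝ}
    (h : Tendsto (fun n : ℕ => (∑ k ∈ Finset.range n, |a k - L|) / n) atTop (nhds 0)) :
    Tendsto (fun n : ℕ => (∑ k ∈ Finset.range n, a k) / n) atTop (nhds L) := by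
  rw [← tendsto_sub_nhds_zero_iff]
  refine squeeze_zero_norm' ?_ h
  filter_upwards [eventually_gt_atTop 0] with n hn
  have hn' : (0 : ℝ) < n := by exact_mod_cast hn
  have hmean : (∑ k ∈ Finset.range n, a k) / n - L = (∑ k ∈ Finset.range n, (a k - L)) / n := by
    rw [Finset.sum_sub_distrib, Finset.sum_const, Finset.card_range, nsmul_eq_mul]
    field_simp
  rw [Real.norm_eq_abs, hmean, abs_div, abs_of_pos hn']
  gcongr
  exact Finset.abs_sum_le_sum_abs _ _

theorem stmt6_general {X : Type*} [MetricSpace X]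
    (A : Set X)
    (Aseq : ℕ → Set X)
    (hbd : WijsmanBounded Aseq) (h : WijsmanStatConvTo Aseq A) :
    WijsmanCesaroTo Aseq A := by
  intro x
  obtain ⟨M, hM⟩ := hbd x
  have hbound : ∀ k, |infDist x (Aseq k) - infDist x A| ≤ M + infDist x A := fun k =>
    abs_sub_le_iff.2 ⟨by linarith [hM k, infDist_nonneg (x := x) (s := A)],
      by linarith [hM k, infDist_nonneg (x := x) (s := Aseq k)]⟩
  exact tendsto_cesaro_of_tendsto_cesaro_abs_sub
    (tendsto_cesaro_abs_of_bounded_of_hasNatDensity hbound (h x))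

/-- A Wijsman bounded, Wijsman statistically convergent sequence is
Wijsman Cesàro summable (to the same limit). -/
theorem stmt6 {X : Type*} [MetricSpace X]
    (A : Set X) (hA : A.Nonempty) (hAcl : IsClosed A)
    (Aseq : ℕ → Set X) (hAseq : ∀ k, (Aseq k).Nonempty ∧ IsClosed (Aseq k))
    (hbd : WijsmanBounded Aseq) (h : WijsmanStatConvTo Aseq A) :
    WijsmanCesaroTo Aseq A :=
  stmt6_general A Aseq hbd h
end

section
/- Let (X,ρ) be a metric space, let (A_k) be a sequence in CL(X), let A ∈ CL(X) and let f : [0,∞) → [0,∞) be a modulus. If (A_k) is Wijsman strongly Cesàro summable to A, then (A_k) is Wijsman strongly Cesàro summable to A with respect to f, i.e., [Ww^f]-lim A_k = A. -/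
open Filter Metric Set
open scoped Classical

/-- Wijsman strong Cesàro summability implies Wijsman strong Cesàro
summability with respect to any modulus `f`. -/
theorem stmt8 {X : Type*} [MetricSpace X]
    (A : Set X) (hA : A.Nonempty) (hAcl : IsClosed A)
    (Aseq : ℕ → Set X) (hAseq : ∀ k, (Aseq k).Nonempty ∧ IsClosed (Aseq k))
    (f : ℝ → ℝ) (hf : IsModulus f)
    (h : WijsmanStrongCesaroTo (fun t => t) Aseq A) :
    WijsmanStrongCesaroTo f Aseq A := by
  obtain ⟨hf0, hfiff, hfsub, hfmono, hfcont⟩ := hf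
  have hf00 : f 0 = 0 := (hfiff 0 le_rfl).mpr rfl
  -- iterated subadditivity
  have hiter : ∀ (n : ℕ) (δ : ℝ), 0 ≤ δ → f ((n : ℝ) * δ) ≤ (n : ℝ) * f δ := by
    intro n δ hδ
    induction n with
    | zero => simp [hf00]
    | succ m ih =>
      have he : ((m + 1 : ℕ) : ℝ) * δ = (m : ℝ) * δ + δ := by push_cast; ring
      rw [he]
      calc f ((m : ℝ) * δ + δ) ≤ f ((m : ℝ) * δ) + f δ :=
            hfsub _ _ (by positivity) hδ
        _ ≤ (m : ℝ) * f δ + f δ := by linarith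
        _ = ((m + 1 : ℕ) : ℝ) * f δ := by push_cast; ring
  have hlin : ∀ (δ t : ℝ), 0 < δ → 0 ≤ t → f t ≤ (t / δ) * f δ + f δ := by
    intro δ t hδ ht
    set n : ℕ := ⌈t / δ⌉₊ with hn
    have htd : 0 ≤ t / δ := by positivity
    have h1 : t ≤ (n : ℝ) * δ := by
      rw [← div_le_iff₀ hδ] at *
      · exact Nat.le_ceil _
    have h2 : f t ≤ f ((n : ℝ) * δ) :=
      hfmono (Set.mem_Ici.mpr ht) (Set.mem_Ici.mpr (by positivity)) h1
    have h3 : (n : ℝ) ≤ t / δ + 1 := le_of_lt (Nat.ceil_lt_add_one htd)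
    have h4 : f ((n : ℝ) * δ) ≤ (n : ℝ) * f δ := hiter n δ hδ.le
    have h5 : 0 ≤ f δ := hf0 δ hδ.le
    nlinarith
  intro x
  have hT := h x
  rw [Metric.tendsto_atTop] at hT ⊢
  intro ε hε
  -- find δ' > 0 with f δ' < ε/2
  have hc : ContinuousWithinAt f (Set.Ici 0) 0 := hfcont 0 (Set.mem_Ici.mpr le_rfl)
  rw [Metric.continuousWithinAt_iff] at hc
  obtain ⟨δ, hδpos, hδ⟩ := hc (ε / 2) (by linarith)
  set δ' : ℝ := δ / 2 with hδ'
  have hδ'pos : 0 < δ' := by positivity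
  have hfδ' : f δ' < ε / 2 := by
    have := hδ (Set.mem_Ici.mpr hδ'pos.le)
      (by rw [Real.dist_eq, sub_zero, abs_of_nonneg hδ'pos.le]; linarith)
    rw [Real.dist_eq, hf00, sub_zero] at this
    calc f δ' ≤ |f δ'| := le_abs_self _
      _ < ε / 2 := this
  have hfδ'pos : 0 < f δ' := by
    rcases lt_or_eq_of_le (hf0 δ' hδ'pos.le) with h' | h'
    · exact h'
    · exact absurd ((hfiff δ' hδ'pos.le).mp h'.symm) hδ'pos.ne'
  -- choose N from hT
  obtain ⟨N, hN⟩ := hT ((ε / 2) * δ' / f δ') (by positivity)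
  refine ⟨N, fun n hn => ?_⟩
  set g : ℕ → ℝ := fun k => |infDist x (Aseq k) - infDist x A| with hg
  have hgnn : ∀ k, 0 ≤ g k := fun k => abs_nonneg _
  rcases Nat.eq_zero_or_pos n with h0 | hpos
  · subst h0; simpa [Real.dist_eq] using hε
  have hnpos : (0 : ℝ) < n := by exact_mod_cast hpos
  have hTn := hN n hn
  rw [Real.dist_eq, sub_zero] at hTn
  have hTnn : 0 ≤ (∑ k ∈ Finset.range n, g k) / (n : ℝ) := by
    apply div_nonneg _ hnpos.le
    exact Finset.sum_nonneg fun k _ => hgnn k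
  have hTn' : (∑ k ∈ Finset.range n, g k) / (n : ℝ) < (ε / 2) * δ' / f δ' := by
    have : |(∑ k ∈ Finset.range n, g k) / (n : ℝ)| < (ε / 2) * δ' / f δ' := hTn
    rwa [abs_of_nonneg hTnn] at this
  have hS : ∑ k ∈ Finset.range n, f (g k) ≤
      (f δ' / δ') * (∑ k ∈ Finset.range n, g k) + (n : ℝ) * f δ' := by
    calc ∑ k ∈ Finset.range n, f (g k)
        ≤ ∑ k ∈ Finset.range n, ((g k / δ') * f δ' + f δ') :=
          Finset.sum_le_sum fun k _ => hlin δ' (g k) hδ'pos (hgnn k)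
      _ = (f δ' / δ') * (∑ k ∈ Finset.range n, g k) + (n : ℝ) * f δ' := by
          rw [Finset.sum_add_distrib, ← Finset.sum_mul, Finset.sum_const,
            Finset.card_range, ← Finset.sum_div, nsmul_eq_mul]
          ring
  have hSnn : 0 ≤ (∑ k ∈ Finset.range n, f (g k)) / (n : ℝ) := by
    apply div_nonneg _ hnpos.le
    exact Finset.sum_nonneg fun k _ => hf0 _ (hgnn k)
  rw [Real.dist_eq, sub_zero, abs_of_nonneg hSnn]
  have key : (∑ k ∈ Finset.range n, f (g k)) / (n : ℝ) ≤
      (f δ' / δ') * ((∑ k ∈ Finset.range n, g k) / (n : ℝ)) + f δ' := by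
    rw [div_le_iff₀ hnpos]
    calc ∑ k ∈ Finset.range n, f (g k)
        ≤ (f δ' / δ') * (∑ k ∈ Finset.range n, g k) + (n : ℝ) * f δ' := hS
      _ = ((f δ' / δ') * ((∑ k ∈ Finset.range n, g k) / (n : ℝ)) + f δ') * (n : ℝ) := by
          field_simp
  have hbound : (f δ' / δ') * ((∑ k ∈ Finset.range n, g k) / (n : ℝ)) <
      (f δ' / δ') * ((ε / 2) * δ' / f δ') := by
    apply mul_lt_mul_of_pos_left hTn' (by positivity)
  have heq : (f δ' / δ') * ((ε / 2) * δ' / f δ') = ε / 2 := by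
    field_simp
  linarith
end

section
/- Let (X,ρ) be a metric space, let A ∈ CL(X) and let (A_k) be a sequence in CL(X). If f : [0,∞) → [0,∞) is a modulus such that lim_{t→∞} f(t)/t > 0 and [Ww^f]-lim A_k = A, then (A_k) is Wijsman strongly Cesàro summable to A. -/
open Filter Metric Set
open scoped Classical

lemma modulus_iter (f : ℝ → ℝ) (hf : IsModulus f) (t : ℝ) (ht : 0 ≤ t) :
    ∀ n : ℕ, f ((n : ℝ) * t) ≤ (n : ℝ) * f t := by
  obtain ⟨h0, hiff, hsub, _, _⟩ := hf
  intro n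
  induction n with
  | zero =>
    simp only [Nat.cast_zero, zero_mul]
    exact le_of_eq ((hiff 0 le_rfl).mpr rfl)
  | succ n ih =>
    have : ((n : ℝ) + 1) * t = (n : ℝ) * t + t := by ring
    rw [Nat.cast_succ, this]
    calc f ((n : ℝ) * t + t) ≤ f ((n : ℝ) * t) + f t :=
          hsub _ _ (by positivity) ht
      _ ≤ (n : ℝ) * f t + f t := by linarith
      _ = ((n : ℝ) + 1) * f t := by ring

lemma modulus_lower (f : ℝ → ℝ) (hf : IsModulus f) (β : ℝ)
    (hβ : Tendsto (fun t : ℝ => f t / t) atTop (nhds β)) (t : ℝ) (ht : 0 ≤ t) :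
    β * t ≤ f t := by
  rcases eq_or_lt_of_le ht with h0 | ht
  · rw [← h0, mul_zero]
    exact hf.1 0 le_rfl
  · have hcomp : Tendsto (fun n : ℕ => f ((n : ℝ) * t) / ((n : ℝ) * t)) atTop (nhds β) := by
      apply hβ.comp
      exact Tendsto.atTop_mul_const ht tendsto_natCast_atTop_atTop
    have hle : β ≤ f t / t := by
      refine le_of_tendsto hcomp ?_
      filter_upwards [eventually_ge_atTop 1] with n hn
      have hnt : (0:ℝ) < (n : ℝ) * t := by
        have : (1:ℝ) ≤ (n:ℝ) := by exact_mod_cast hn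
        nlinarith
      rw [div_le_div_iff₀ hnt ht]
      calc f ((n:ℝ) * t) * t ≤ ((n:ℝ) * f t) * t := by
            have := modulus_iter f hf t ht.le n
            nlinarith
        _ = f t * ((n:ℝ) * t) := by ring
    calc β * t ≤ (f t / t) * t := by nlinarith
      _ = f t := by field_simp

/-- If `f` is a modulus with `lim_{t→∞} f(t)/t > 0` and
`[Ww^f]-lim A_k = A`, then `(A_k)` is Wijsman strongly Cesàro summable to `A`. -/
theorem stmt10 {X : Type*} [MetricSpace X]
    (A : Set X) (hA : A.Nonempty) (hAcl : IsClosed A)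
    (Aseq : ℕ → Set X) (hAseq : ∀ k, (Aseq k).Nonempty ∧ IsClosed (Aseq k))
    (f : ℝ → ℝ) (hf : IsModulus f)
    (hβ : ∃ β : ℝ, 0 < β ∧ Tendsto (fun t : ℝ => f t / t) atTop (nhds β))
    (h : WijsmanStrongCesaroTo f Aseq A) :
    WijsmanStrongCesaroTo (fun t => t) Aseq A := by
  obtain ⟨β, hβpos, hβlim⟩ := hβ
  intro x
  have hx := h x
  have hsq := hx.const_mul (1/β)
  rw [mul_zero] at hsq
  apply squeeze_zero (fun n => by positivity) _ hsq
  intro n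
  set g : ℕ → ℝ := fun k => |infDist x (Aseq k) - infDist x A| with hg
  have hsum : β * ∑ k ∈ Finset.range n, g k ≤ ∑ k ∈ Finset.range n, f (g k) := by
    rw [Finset.mul_sum]
    exact Finset.sum_le_sum fun k _ => modulus_lower f hf β hβlim (g k) (abs_nonneg _)
  rcases Nat.eq_zero_or_pos n with rfl | hn
  · simp
  · have hn' : (0:ℝ) < (n:ℝ) := by exact_mod_cast hn
    rw [mul_div_assoc'] at *
    rw [div_le_div_iff₀ hn' hn']
    have hfg : 0 ≤ ∑ k ∈ Finset.range n, f (g k) :=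
      Finset.sum_nonneg fun k _ => hf.1 _ (abs_nonneg _)
    have : ∑ k ∈ Finset.range n, g k ≤ 1 / β * ∑ k ∈ Finset.range n, f (g k) := by
      rw [one_div, inv_mul_eq_div, le_div_iff₀ hβpos]
      linarith [hsum]
    nlinarith
end

section
/- Let (X,ρ) be a metric space, let A ∈ CL(X) and let (A_k) be a sequence in CL(X). Suppose f : [0,∞) → [0,∞) is an unbounded modulus such that lim_{t→∞} f(t)/t > 0 and there is a constant c ∈ (0,∞) with f(xy) ≥ c·f(x)·f(y) for all x, y ∈ [0,∞). If (A_k) is Wijsman strongly Cesàro summable to A with respect to f, then (A_k) is f-Wijsman statistically convergent to A. -/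
open Filter Metric Set
open scoped Classical

lemma countLe_le_card_filter_add_one (K : Set ℕ) (n : ℕ) :
    countLe K n ≤ ((Finset.range n).filter (· ∈ K)).card + 1 := by
  rw [countLe_eq_card_filter, Finset.range_add_one, Finset.filter_insert]
  split_ifs
  · exact Finset.card_insert_le _ _
  · exact Nat.le_succ _

lemma countLe_mono {K L : Set ℕ} (hKL : K ⊆ L) (n : ℕ) : countLe K n ≤ countLe L n := by
  simp only [countLe_eq_card_filter]
  exact Finset.card_le_card (Finset.monotone_filter_right _ fun _ _ hk => hKL hk)

lemma HasNatDensity.mono {K L : Set ℕ} (hL : HasNatDensity L 0) (hKL : K ⊆ L) :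
    HasNatDensity K 0 :=
  squeeze_zero (fun n => by positivity)
    (fun n => div_le_div_of_nonneg_right (by exact_mod_cast countLe_mono hKL n) n.cast_nonneg) hL

lemma hasNatDensity_zero_of_tendsto_cesaro {a : ℕ → ℝ} (ha : ∀ k, 0 ≤ a k) {η : ℝ} (hη : 0 < η)
    (h : Tendsto (fun n : ℕ => (∑ k ∈ Finset.range n, a k) / n) atTop (nhds 0)) :
    HasNatDensity {k | η ≤ a k} 0 := by
  have hbound : Tendsto (fun n : ℕ => (∑ k ∈ Finset.range n, a k) / n / η + 1 / n)
      atTop (nhds 0) := by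
    simpa using (h.div_const η).add tendsto_one_div_atTop_nhds_zero_nat
  refine squeeze_zero (fun n => by positivity) (fun n => ?_) hbound
  set F := (Finset.range n).filter (· ∈ {k | η ≤ a k})
  have hmarkov : η * F.card ≤ ∑ k ∈ Finset.range n, a k :=
    calc η * F.card = ∑ _k ∈ F, η := by rw [Finset.sum_const, nsmul_eq_mul, mul_comm]
      _ ≤ ∑ k ∈ F, a k := Finset.sum_le_sum fun k hk => (Finset.mem_filter.mp hk).2
      _ ≤ ∑ k ∈ Finset.range n, a k :=
        Finset.sum_le_sum_of_subset_of_nonneg (Finset.filter_subset _ _) fun k _ _ => ha k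
  have hcount : (countLe {k | η ≤ a k} n : ℝ) ≤ (∑ k ∈ Finset.range n, a k) / η + 1 := by
    have hle : (countLe {k | η ≤ a k} n : ℝ) ≤ F.card + 1 := by
      exact_mod_cast countLe_le_card_filter_add_one {k | η ≤ a k} n
    have hcard : (F.card : ℝ) ≤ (∑ k ∈ Finset.range n, a k) / η := by
      rw [le_div_iff₀ hη]; linarith
    linarith
  calc (countLe {k | η ≤ a k} n : ℝ) / n ≤ ((∑ k ∈ Finset.range n, a k) / η + 1) / n :=
        div_le_div_of_nonneg_right hcount n.cast_nonneg
    _ = (∑ k ∈ Finset.range n, a k) / n / η + 1 / n := by ring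

lemma HasNatDensity.eventually_mul_countLe_le {K : Set ℕ} (hK : HasNatDensity K 0) (T : ℝ) :
    ∀ᶠ n : ℕ in atTop, T * countLe K n ≤ n := by
  rcases le_or_gt T 0 with hT | hT
  · exact Eventually.of_forall fun n => (mul_nonpos_of_nonpos_of_nonneg hT (by positivity)).trans
      n.cast_nonneg
  filter_upwards [hK.eventually (gt_mem_nhds (inv_pos.mpr hT)), eventually_gt_atTop 0]
    with n hlt hn
  have hn' : (0 : ℝ) < n := by exact_mod_cast hn
  rw [div_lt_iff₀ hn'] at hlt
  calc T * countLe K n ≤ T * (T⁻¹ * n) := by gcongr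
    _ = n := by field_simp

lemma div_le_inv_of_mul_le {f : ℝ → ℝ} (hf0 : ∀ x, 0 ≤ x → 0 ≤ f x)
    (hmono : MonotoneOn f (Ici 0)) {c : ℝ} (hc : 0 < c)
    (hmul : ∀ x y : ℝ, 0 ≤ x → 0 ≤ y → c * (f x * f y) ≤ f (x * y))
    {m n T : ℝ} (hm : 0 ≤ m) (hT : 0 ≤ T) (hfT : 0 < f T) (hTm : T * m ≤ n) :
    f m / f n ≤ (c * f T)⁻¹ := by
  have hTm0 : 0 ≤ T * m := mul_nonneg hT hm
  have hsuper : c * f T * f m ≤ f n :=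
    calc c * f T * f m = c * (f T * f m) := mul_assoc _ _ _
      _ ≤ f (T * m) := hmul T m hT hm
      _ ≤ f n := hmono hTm0 (hTm0.trans hTm) hTm
  refine div_le_of_le_mul₀ (hf0 n (hTm0.trans hTm)) (by positivity) ?_
  calc f m = (c * f T)⁻¹ * (c * f T * f m) := by field_simp
    _ ≤ (c * f T)⁻¹ * f n := by gcongr

lemma HasNatDensity.hasFDensity_zero {f : ℝ → ℝ} (hf0 : ∀ x, 0 ≤ x → 0 ≤ f x)
    (hmono : MonotoneOn f (Ici 0)) (hunb : IsUnboundedOn f) {c : ℝ} (hc : 0 < c)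
    (hmul : ∀ x y : ℝ, 0 ≤ x → 0 ≤ y → c * (f x * f y) ≤ f (x * y))
    {K : Set ℕ} (hK : HasNatDensity K 0) : HasFDensity f K 0 := by
  refine tendsto_order.2 ⟨fun a ha => Eventually.of_forall fun n =>
    ha.trans_le (div_nonneg (hf0 _ (by positivity)) (hf0 _ (by positivity))), fun δ hδ => ?_⟩
  obtain ⟨T, hT, hfT⟩ := hunb (δ⁻¹ / c)
  have hfT0 : 0 < f T := lt_of_le_of_lt (by positivity) hfT
  have hlt : (c * f T)⁻¹ < δ := by
    rw [inv_lt_comm₀ (by positivity) hδ]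
    rwa [div_lt_iff₀' hc] at hfT
  filter_upwards [hK.eventually_mul_countLe_le T] with n hn
  exact (div_le_inv_of_mul_le hf0 hmono hc hmul (by positivity) hT hfT0 hn).trans_lt hlt

theorem stmt11_general {X : Type*} [MetricSpace X]
    (A : Set X)
    (Aseq : ℕ → Set X)
    (f : ℝ → ℝ) (hf : IsModulus f) (hfu : IsUnboundedOn f)
    (c : ℝ) (hc : 0 < c)
    (hmul : ∀ x y : ℝ, 0 ≤ x → 0 ≤ y → c * (f x * f y) ≤ f (x * y))
    (h : WijsmanStrongCesaroTo f Aseq A) :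
    FWijsmanStatConvTo f Aseq A := by
  intro x ε hε
  have hfε : 0 < f ε := hf.pos hε
  obtain ⟨hf0, -, -, hmono, -⟩ := hf
  have hdens : HasNatDensity {k | f ε ≤ f |infDist x (Aseq k) - infDist x A|} 0 :=
    hasNatDensity_zero_of_tendsto_cesaro (fun k => hf0 _ (abs_nonneg _)) hfε (h x)
  refine (hdens.mono fun k hk => ?_).hasFDensity_zero hf0 hmono hfu hc hmul
  exact hmono (mem_Ici.2 hε.le) (mem_Ici.2 (abs_nonneg _)) hk

/-- Let `f` be an unbounded modulus with `lim_{t→∞} f(t)/t > 0` and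
`f(xy) ≥ c f(x) f(y)` for some `c > 0` and all `x, y ≥ 0`. Then Wijsman strong
Cesàro summability w.r.t. `f` implies `f`-Wijsman statistical convergence. -/
theorem stmt11 {X : Type*} [MetricSpace X]
    (A : Set X) (hA : A.Nonempty) (hAcl : IsClosed A)
    (Aseq : ℕ → Set X) (hAseq : ∀ k, (Aseq k).Nonempty ∧ IsClosed (Aseq k))
    (f : ℝ → ℝ) (hf : IsModulus f) (hfu : IsUnboundedOn f)
    (hβ : ∃ β : ℝ, 0 < β ∧ Tendsto (fun t : ℝ => f t / t) atTop (nhds β))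
    (c : ℝ) (hc : 0 < c)
    (hmul : ∀ x y : ℝ, 0 ≤ x → 0 ≤ y → c * (f x * f y) ≤ f (x * y))
    (h : WijsmanStrongCesaroTo f Aseq A) :
    FWijsmanStatConvTo f Aseq A :=
  stmt11_general A Aseq f hf hfu c hc hmul h
end

section
/- Let (X,ρ) be a metric space, let A ∈ CL(X) and let (A_k) be a sequence in CL(X). Suppose f : [0,∞) → [0,∞) is an unbounded modulus such that lim_{t→∞} f(t)/t > 0 and there is a constant c ∈ (0,∞) with f(xy) ≥ c·f(x)·f(y) for all x, y ∈ [0,∞). If (A_k) is Wijsman bounded and f-Wijsman statistically convergent to A, then (A_k) is Wijsman strongly Cesàro summable to A with respect to f. -/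
open Filter Metric Set
open scoped Classical

lemma modulus_zero {f : ℝ → ℝ} (hf : IsModulus f) : f 0 = 0 :=
  (hf.2.1 0 le_rfl).mpr rfl

lemma modulus_one_pos {f : ℝ → ℝ} (hf : IsModulus f) : 0 < f 1 := by
  rcases lt_or_eq_of_le (hf.1 1 zero_le_one) with h | h
  · exact h
  · exact absurd ((hf.2.1 1 zero_le_one).mp h.symm) one_ne_zero

lemma modulus_nat_mul {f : ℝ → ℝ} (hf : IsModulus f) (p : ℕ) {t : ℝ} (ht : 0 ≤ t) :
    f (p * t) ≤ p * f t := by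
  induction p with
  | zero => simp [modulus_zero hf]
  | succ n ih =>
    have he : ((n : ℝ) + 1) * t = n * t + t := by ring
    push_cast
    rw [he]
    calc f (n * t + t) ≤ f (n * t) + f t := hf.2.2.1 _ _ (by positivity) ht
      _ ≤ n * f t + f t := by linarith
      _ = ((n : ℝ) + 1) * f t := by ring

lemma fdensity_zero_to_natdensity_zero {f : ℝ → ℝ} (hf : IsModulus f) {K : Set ℕ}
    (h : HasFDensity f K 0) : HasNatDensity K 0 := by
  rw [HasNatDensity, Metric.tendsto_nhds]
  intro ε hε
  obtain ⟨p, hp⟩ := exists_nat_gt (1 / ε)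
  have hp0 : (0 : ℝ) < p := lt_trans (by positivity) hp
  have hinv : (0 : ℝ) < 1 / p := by positivity
  filter_upwards [h.eventually (gt_mem_nhds hinv), eventually_ge_atTop 1] with n h1 h2
  have hn1 : (1 : ℝ) ≤ (n : ℝ) := by exact_mod_cast h2
  have hn0 : (0 : ℝ) < (n : ℝ) := by linarith
  set a : ℝ := (countLe K n : ℝ) with ha
  have ha0 : 0 ≤ a := Nat.cast_nonneg _
  have hfn : 0 < f n :=
    lt_of_lt_of_le (modulus_one_pos hf)
      (hf.2.2.2.1 (mem_Ici.mpr zero_le_one) (mem_Ici.mpr (by linarith)) hn1)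
  have hfa0 : 0 ≤ f a := hf.1 a ha0
  rw [Real.dist_eq, sub_zero, abs_of_nonneg (by positivity)]
  by_contra hcon
  push_neg at hcon
  have hεna : ε * n ≤ a := by
    rw [le_div_iff₀ hn0] at hcon; linarith
  -- f n ≤ f (p * (ε * n)) ≤ p * f (ε * n) ≤ p * f a
  have hεn0 : 0 ≤ ε * n := by positivity
  have h1p : (n : ℝ) ≤ (p : ℝ) * (ε * n) := by
    have : 1 / ε < p := hp
    have : 1 < (p : ℝ) * ε := by
      rw [div_lt_iff₀ hε] at hp; linarith
    nlinarith
  have hstep1 : f n ≤ f ((p : ℝ) * (ε * n)) :=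
    hf.2.2.2.1 (mem_Ici.mpr (by linarith)) (mem_Ici.mpr (by positivity)) h1p
  have hstep2 : f ((p : ℝ) * (ε * n)) ≤ p * f (ε * n) := modulus_nat_mul hf p hεn0
  have hstep3 : f (ε * n) ≤ f a :=
    hf.2.2.2.1 (mem_Ici.mpr hεn0) (mem_Ici.mpr ha0) hεna
  have hfin : f n ≤ p * f a := by
    calc f n ≤ f ((p : ℝ) * (ε * n)) := hstep1
      _ ≤ p * f (ε * n) := hstep2
      _ ≤ p * f a := by nlinarith
  -- but f a / f n < 1 / p
  rw [div_lt_div_iff₀ hfn hp0] at h1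
  linarith

/-- Let `f` be an unbounded modulus with `lim_{t→∞} f(t)/t > 0` and
`f(xy) ≥ c f(x) f(y)` for some `c > 0` and all `x, y ≥ 0`. Then a Wijsman bounded,
`f`-Wijsman statistically convergent sequence is Wijsman strongly Cesàro summable
w.r.t. `f` (to the same limit). -/
theorem stmt12 {X : Type*} [MetricSpace X]
    (A : Set X) (hA : A.Nonempty) (hAcl : IsClosed A)
    (Aseq : ℕ → Set X) (hAseq : ∀ k, (Aseq k).Nonempty ∧ IsClosed (Aseq k))
    (f : ℝ → ℝ) (hf : IsModulus f) (hfu : IsUnboundedOn f)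
    (hβ : ∃ β : ℝ, 0 < β ∧ Tendsto (fun t : ℝ => f t / t) atTop (nhds β))
    (c : ℝ) (hc : 0 < c)
    (hmul : ∀ x y : ℝ, 0 ≤ x → 0 ≤ y → c * (f x * f y) ≤ f (x * y))
    (hbd : WijsmanBounded Aseq) (h : FWijsmanStatConvTo f Aseq A) :
    WijsmanStrongCesaroTo f Aseq A := by
  intro x
  obtain ⟨M, hM⟩ := hbd x
  set D := infDist x A with hD
  set g : ℕ → ℝ := fun k => |infDist x (Aseq k) - D| with hg
  have hg0 : ∀ k, 0 ≤ g k := fun k => abs_nonneg _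
  have hD0 : 0 ≤ D := infDist_nonneg
  set B := M + D with hB
  have hgB : ∀ k, g k ≤ B := by
    intro k
    have h1 : 0 ≤ infDist x (Aseq k) := infDist_nonneg
    rw [hg, abs_le]
    constructor <;> [nlinarith [hM k]; nlinarith [hM k]]
  have hB0 : 0 ≤ B := le_trans (hg0 0) (hgB 0)
  have hfB0 : 0 ≤ f B := hf.1 B hB0
  rw [Metric.tendsto_nhds]
  intro ε hε
  -- choose δ' with f δ' < ε/3
  have hc0 : ContinuousWithinAt f (Set.Ici 0) 0 := hf.2.2.2.2 0 (mem_Ici.mpr le_rfl)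
  obtain ⟨δ, hδ0, hδ⟩ := Metric.continuousWithinAt_iff.mp hc0 (ε / 3) (by linarith)
  set δ' := δ / 2 with hδ'
  have hδ'0 : 0 < δ' := by positivity
  have hfδ' : f δ' < ε / 3 := by
    have := hδ (mem_Ici.mpr (le_of_lt hδ'0)) (by
      rw [Real.dist_eq, sub_zero, abs_of_nonneg (le_of_lt hδ'0)]; linarith)
    rwa [Real.dist_eq, modulus_zero hf, sub_zero,
      abs_of_nonneg (hf.1 δ' (le_of_lt hδ'0))] at this
  set K : Set ℕ := {k : ℕ | δ' ≤ |infDist x (Aseq k) - infDist x A|} with hK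
  have hnat : HasNatDensity K 0 := fdensity_zero_to_natdensity_zero hf (h x δ' hδ'0)
  have hc'0 : (0 : ℝ) < ε / (3 * (f B + 1)) := by positivity
  filter_upwards [hnat.eventually (gt_mem_nhds hc'0), eventually_ge_atTop 1] with n h1 h2
  have hn0 : (0 : ℝ) < (n : ℝ) := by exact_mod_cast Nat.lt_of_lt_of_le Nat.zero_lt_one h2
  -- sum bound
  have hsum : ∑ k ∈ Finset.range n, f (g k) ≤
      n * f δ' + ((Finset.range n).filter (fun k => k ∈ K)).card * f B := by
    calc ∑ k ∈ Finset.range n, f (g k)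
        ≤ ∑ k ∈ Finset.range n, (f δ' + if k ∈ K then f B else 0) := by
          apply Finset.sum_le_sum
          intro k _
          by_cases hk : k ∈ K
          · rw [if_pos hk]
            have : f (g k) ≤ f B :=
              hf.2.2.2.1 (mem_Ici.mpr (hg0 k)) (mem_Ici.mpr hB0) (hgB k)
            have : 0 ≤ f δ' := hf.1 δ' (le_of_lt hδ'0)
            linarith [hf.2.2.2.1 (mem_Ici.mpr (hg0 k)) (mem_Ici.mpr hB0) (hgB k)]
          · rw [if_neg hk]
            have hklt : g k ≤ δ' := by
              rw [hK] at hk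
              simp only [Set.mem_setOf_eq, not_le] at hk
              exact le_of_lt hk
            have := hf.2.2.2.1 (mem_Ici.mpr (hg0 k)) (mem_Ici.mpr (le_of_lt hδ'0)) hklt
            linarith
      _ = n * f δ' + ∑ k ∈ Finset.range n, (if k ∈ K then f B else 0) := by
          rw [Finset.sum_add_distrib, Finset.sum_const, Finset.card_range,
            nsmul_eq_mul]
      _ = n * f δ' + ((Finset.range n).filter (fun k => k ∈ K)).card * f B := by
          rw [← Finset.sum_filter, Finset.sum_const, nsmul_eq_mul]
  have hcard : (((Finset.range n).filter (fun k => k ∈ K)).card : ℝ) ≤ (countLe K n : ℝ) := by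
    have hset : {k : ℕ | k ≤ n ∧ k ∈ K} =
        ↑((Finset.range (n + 1)).filter (fun k => k ∈ K)) := by
      ext k
      simp [Nat.lt_succ_iff]
    have : countLe K n = ((Finset.range (n + 1)).filter (fun k => k ∈ K)).card := by
      rw [countLe, hset, Nat.card_coe_set_eq, Set.ncard_coe_finset]
    rw [this]
    exact_mod_cast Finset.card_le_card
      (Finset.filter_subset_filter _ (Finset.range_subset_range.mpr (Nat.le_succ n)))
  -- combine
  have hcount : (countLe K n : ℝ) < (ε / (3 * (f B + 1))) * n := by
    rw [div_lt_iff₀ hn0] at h1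
    linarith
  have hfBbound : f B * (ε / (3 * (f B + 1))) ≤ ε / 3 := by
    rw [← mul_div_assoc, div_le_div_iff₀ (by positivity) (by norm_num : (0:ℝ) < 3)]
    have : 0 < f B + 1 := by linarith
    nlinarith
  have hS : ∑ k ∈ Finset.range n, f (g k) < ε * n := by
    have h3 : (((Finset.range n).filter (fun k => k ∈ K)).card : ℝ) * f B
        ≤ (ε / (3 * (f B + 1))) * n * f B := by
      nlinarith
    have h4 : (ε / (3 * (f B + 1))) * n * f B ≤ (ε / 3) * n := by
      nlinarith
    calc ∑ k ∈ Finset.range n, f (g k)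
        ≤ n * f δ' + ((Finset.range n).filter (fun k => k ∈ K)).card * f B := hsum
      _ ≤ n * f δ' + (ε / 3) * n := by linarith
      _ < n * (ε / 3) + (ε / 3) * n := by nlinarith
      _ ≤ ε * n := by nlinarith
  have hSnn : 0 ≤ ∑ k ∈ Finset.range n, f (g k) :=
    Finset.sum_nonneg fun k _ => hf.1 (g k) (hg0 k)
  rw [Real.dist_eq, sub_zero, abs_of_nonneg (by positivity)]
  rw [div_lt_iff₀ hn0]
  exact hS
end

section
/- Let X = ℝ with the standard metric and define A_k ∈ CL(ℝ) by A_k = {k} if k is a perfect square and A_k = {0} otherwise. Then the sequence (A_k) is Wijsman statistically convergent to {0}, but it is not Wijsman Cesàro summable to any A ∈ CL(ℝ); in fact the Cesàro means (1/n) ∑_{k=1}^n d(0,A_k) tend to infinity. -/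
open Filter Metric Set
open scoped Classical

noncomputable def mySeq : ℕ → Set ℝ := fun k =>
  if ∃ m : ℕ, 0 < m ∧ k = m ^ 2 then {(k : ℝ)} else {0}

lemma mySeq_nonsq {k : ℕ} (h : ¬ ∃ m : ℕ, 0 < m ∧ k = m ^ 2) : mySeq k = {0} := by
  simp [mySeq, h]

lemma mySeq_sq {m : ℕ} (hm : 0 < m) : mySeq (m ^ 2) = {((m : ℝ)) ^ 2} := by
  have : ∃ m' : ℕ, 0 < m' ∧ m ^ 2 = m' ^ 2 := ⟨m, hm, rfl⟩
  simp only [mySeq, if_pos this]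
  norm_cast

lemma sumsq_lb : ∀ s : ℕ, (s : ℝ) ^ 3 ≤ 3 * ∑ m ∈ Finset.Icc 1 s, (m : ℝ) ^ 2 := by
  intro s
  induction s with
  | zero => simp
  | succ n ih =>
    rw [Finset.sum_Icc_succ_top (by omega)]
    push_cast
    nlinarith [ih, (Nat.cast_nonneg n : (0:ℝ) ≤ n)]

lemma sum_lb (n : ℕ) (hn : 1 ≤ n) :
    ((Nat.sqrt (n - 1) : ℝ)) / 12 ≤
      (∑ k ∈ Finset.range n, infDist (0 : ℝ) (mySeq k)) / (n : ℝ) := by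
  set s := Nat.sqrt (n - 1) with hs
  have hsub : (Finset.Icc 1 s).image (· ^ 2) ⊆ Finset.range n := by
    intro k hk
    simp only [Finset.mem_image, Finset.mem_Icc] at hk
    obtain ⟨m, ⟨h1, h2⟩, rfl⟩ := hk
    have : m ^ 2 ≤ n - 1 := le_trans (Nat.pow_le_pow_left h2 2) (Nat.sqrt_le' _)
    simp only [Finset.mem_range]; omega
  have hnonneg : ∀ k ∈ Finset.range n, 0 ≤ infDist (0 : ℝ) (mySeq k) :=
    fun k _ => infDist_nonneg
  have h1 : ∑ k ∈ (Finset.Icc 1 s).image (· ^ 2), infDist (0 : ℝ) (mySeq k) ≤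
      ∑ k ∈ Finset.range n, infDist (0 : ℝ) (mySeq k) :=
    Finset.sum_le_sum_of_subset_of_nonneg hsub (fun k hk _ => infDist_nonneg)
  have h2 : ∑ k ∈ (Finset.Icc 1 s).image (· ^ 2), infDist (0 : ℝ) (mySeq k) =
      ∑ m ∈ Finset.Icc 1 s, (m : ℝ) ^ 2 := by
    rw [Finset.sum_image]
    · apply Finset.sum_congr rfl
      intro m hm
      simp only [Finset.mem_Icc] at hm
      rw [mySeq_sq hm.1, infDist_singleton]
      simp [abs_of_nonneg, sq_nonneg]
    · intro a _ b _ hab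
      exact Nat.pow_left_injective (by norm_num) hab
  have h3 : (s : ℝ) ^ 3 ≤ 3 * ∑ m ∈ Finset.Icc 1 s, (m : ℝ) ^ 2 := sumsq_lb s
  have hn4 : (n : ℝ) ≤ ((s : ℝ) + 1) ^ 2 := by
    have : n - 1 < (s + 1) ^ 2 := Nat.lt_succ_sqrt' (n - 1)
    have : n ≤ (s + 1) ^ 2 := by omega
    exact_mod_cast (by push_cast; exact_mod_cast Nat.cast_le.mpr this : (n:ℝ) ≤ ((s+1:ℕ):ℝ)^2)
  have hS : (s : ℝ) ^ 3 / 3 ≤ ∑ k ∈ Finset.range n, infDist (0 : ℝ) (mySeq k) := by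
    rw [div_le_iff₀ (by norm_num)]
    calc (s:ℝ)^3 ≤ 3 * ∑ m ∈ Finset.Icc 1 s, (m : ℝ) ^ 2 := h3
    _ = (∑ k ∈ (Finset.Icc 1 s).image (· ^ 2), infDist (0 : ℝ) (mySeq k)) * 3 := by
        rw [h2]; ring
    _ ≤ _ := by nlinarith [h1]
  rcases Nat.eq_zero_or_pos s with hs0 | hs1
  · rw [hs0]
    simp only [Nat.cast_zero, zero_div]
    exact div_nonneg (Finset.sum_nonneg hnonneg) (by positivity)
  · have hnpos : (0:ℝ) < n := by exact_mod_cast hn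
    rw [div_le_div_iff₀ (by norm_num) hnpos]
    have hs1' : (1:ℝ) ≤ (s:ℝ) := by exact_mod_cast hs1
    have h5 : (s:ℝ) * n ≤ (s:ℝ) * ((s:ℝ)+1)^2 :=
      mul_le_mul_of_nonneg_left hn4 (by positivity)
    nlinarith [hS, h5, sq_nonneg ((s:ℝ) - 1), hs1']

lemma sqrt_tendsto : Tendsto (fun n : ℕ => ((Nat.sqrt (n - 1) : ℝ)) / 12) atTop atTop := by
  apply Tendsto.atTop_div_const (by norm_num)
  apply tendsto_natCast_atTop_atTop.comp
  apply tendsto_atTop_atTop.mpr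
  intro b
  refine ⟨b ^ 2 + 1, fun n hn => ?_⟩
  have : b ^ 2 ≤ n - 1 := by omega
  calc b = Nat.sqrt (b ^ 2) := by rw [Nat.sqrt_eq']
  _ ≤ Nat.sqrt (n - 1) := Nat.sqrt_le_sqrt this

lemma cesaro_atTop :
    Tendsto (fun n : ℕ => (∑ k ∈ Finset.range n, infDist (0 : ℝ) (mySeq k)) / (n : ℝ))
      atTop atTop := by
  apply tendsto_atTop_mono' _ _ sqrt_tendsto
  filter_upwards [eventually_ge_atTop 1] with n hn
  exact sum_lb n hn

lemma stat_conv : WijsmanStatConvTo mySeq ({0} : Set ℝ) := by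
  intro x ε hε
  unfold HasNatDensity
  have hbound : ∀ n : ℕ, (countLe {k : ℕ | ε ≤ |infDist x (mySeq k) - infDist x {0}|} n : ℝ)
      ≤ (Nat.sqrt n : ℝ) := by
    intro n
    have hsub : {k : ℕ | k ≤ n ∧ k ∈ {k : ℕ | ε ≤ |infDist x (mySeq k) - infDist x {0}|}} ⊆
        (fun m : ℕ => m ^ 2) '' (Set.Icc 1 (Nat.sqrt n)) := by
      rintro k ⟨hkn, hk⟩
      simp only [Set.mem_setOf_eq] at hk
      by_cases hsq : ∃ m : ℕ, 0 < m ∧ k = m ^ 2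
      · obtain ⟨m, hm, rfl⟩ := hsq
        refine ⟨m, ⟨hm, ?_⟩, rfl⟩
        exact Nat.le_sqrt'.mpr (by nlinarith [hkn])
      · exfalso
        rw [mySeq_nonsq hsq] at hk
        simp at hk
        linarith
    have hfin : ((fun m : ℕ => m ^ 2) '' (Set.Icc 1 (Nat.sqrt n))).Finite :=
      (Set.finite_Icc _ _).image _
    have h1 : countLe {k : ℕ | ε ≤ |infDist x (mySeq k) - infDist x {0}|} n ≤
        Nat.sqrt n := by
      unfold countLe
      rw [Nat.card_coe_set_eq]
      calc Set.ncard _ ≤ Set.ncard ((fun m : ℕ => m ^ 2) '' (Set.Icc 1 (Nat.sqrt n))) :=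
        Set.ncard_le_ncard hsub hfin
      _ ≤ Set.ncard (Set.Icc 1 (Nat.sqrt n)) := Set.ncard_image_le (Set.finite_Icc _ _)
      _ = Nat.sqrt n := by
          rw [← Finset.coe_Icc, Set.ncard_coe_finset, Nat.card_Icc]; omega
    exact_mod_cast h1
  apply squeeze_zero' (g := fun n : ℕ => (Nat.sqrt n : ℝ) / (n : ℝ))
  · filter_upwards with n
    positivity
  · filter_upwards with n
    exact div_le_div_of_nonneg_right (hbound n) (by positivity) |>.trans_eq rfl
  · -- sqrt n / n → 0
    apply squeeze_zero' (g := fun n : ℕ => 1 / (Nat.sqrt n : ℝ))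
    · filter_upwards with n; positivity
    · filter_upwards [eventually_ge_atTop 1] with n hn
      have hs1 : 1 ≤ Nat.sqrt n := by
        have := Nat.sqrt_le_sqrt hn
        simpa using this
      have hspos : (0:ℝ) < (Nat.sqrt n : ℝ) := by exact_mod_cast hs1
      have hnpos : (0:ℝ) < (n : ℝ) := by exact_mod_cast hn
      rw [div_le_div_iff₀ hnpos hspos, one_mul]
      have : Nat.sqrt n ^ 2 ≤ n := Nat.sqrt_le' n
      have h2 : ((Nat.sqrt n ^ 2 : ℕ) : ℝ) ≤ (n:ℝ) := Nat.cast_le.mpr this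
      push_cast at h2
      nlinarith [h2]
    · apply tendsto_const_nhds.div_atTop
      apply tendsto_natCast_atTop_atTop.comp
      apply tendsto_atTop_atTop.mpr
      intro b
      refine ⟨b ^ 2, fun n hn => ?_⟩
      calc b = Nat.sqrt (b ^ 2) := by rw [Nat.sqrt_eq']
      _ ≤ Nat.sqrt n := Nat.sqrt_le_sqrt hn

/-- In `ℝ`, the sequence `A_k = {k}` for `k` a perfect square and
`A_k = {0}` otherwise is Wijsman statistically convergent to `{0}`, is not Wijsman
Cesàro summable to any nonempty closed set, and its Cesàro means at `x = 0` tend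
to infinity. -/
theorem stmt17 :
    let Aseq : ℕ → Set ℝ := fun k =>
      if ∃ m : ℕ, 0 < m ∧ k = m ^ 2 then {(k : ℝ)} else {0}
    WijsmanStatConvTo Aseq ({0} : Set ℝ) ∧
      (∀ B : Set ℝ, B.Nonempty → IsClosed B → ¬ WijsmanCesaroTo Aseq B) ∧
      Tendsto (fun n : ℕ => (∑ k ∈ Finset.range n, infDist (0 : ℝ) (Aseq k)) / (n : ℝ))
        atTop atTop := by
  intro Aseq
  have hA : Aseq = mySeq := rfl
  rw [hA]
  refine ⟨stat_conv, ?_, cesaro_atTop⟩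
  intro B hB hBc h
  exact not_tendsto_nhds_of_tendsto_atTop cesaro_atTop _ (h 0)
end

section
/- Let X = ℝ with the standard metric and define A_k ∈ CL(ℝ) by A_k = {−1} if k is even and A_k = {1} if k is odd. Then for every x ∈ ℝ the Cesàro means σ_n(x) = (1/n) ∑_{k=1}^n d(x,A_k) converge to a finite limit (equal to |x| if x ∉ [−1,1] and to 1 if x ∈ [−1,1]), yet there is no A ∈ CL(ℝ) such that (A_k) is Wijsman Cesàro summable to A. -/
open Filter Metric Set
open scoped Classical

lemma aux_sum_ite (a b : ℝ) (n : ℕ) :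
    ∑ k ∈ Finset.range n, (if Even k then a else b)
      = (((n + 1) / 2 : ℕ) : ℝ) * a + ((n / 2 : ℕ) : ℝ) * b := by
  induction n with
  | zero => simp
  | succ n ih =>
    rw [Finset.sum_range_succ, ih]
    by_cases h : Even n
    · obtain ⟨m, rfl⟩ := h
      have e1 : (m + m + 1) / 2 = m := by omega
      have e2 : (m + m) / 2 = m := by omega
      have e3 : (m + m + 1 + 1) / 2 = m + 1 := by omega
      have e4 : (m + m + 1) / 2 = m := by omega
      simp only [if_pos (Even.add_self m), e1, e2, e3, e4]
      push_cast; ring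
    · obtain ⟨m, rfl⟩ := Nat.not_even_iff_odd.mp h
      have e1 : (2 * m + 1 + 1) / 2 = m + 1 := by omega
      have e2 : (2 * m + 1) / 2 = m := by omega
      have e3 : (2 * m + 1 + 1 + 1) / 2 = m + 1 := by omega
      simp only [if_neg h, e1, e2, e3]
      push_cast; ring

lemma aux_half_tendsto (m : ℕ → ℕ) (h : ∀ n, n ≤ 2 * m n + 1 ∧ 2 * m n ≤ n + 1) :
    Tendsto (fun n : ℕ => (m n : ℝ) / n) atTop (nhds (1 / 2)) := by
  rw [← tendsto_sub_nhds_zero_iff]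
  rw [tendsto_zero_iff_norm_tendsto_zero]
  have hg : Tendsto (fun n : ℕ => (1 / 2 : ℝ) * (1 / n)) atTop (nhds 0) := by
    have := tendsto_one_div_atTop_nhds_zero_nat.const_mul (1 / 2 : ℝ)
    simpa using this
  apply squeeze_zero' (Eventually.of_forall fun n => norm_nonneg _) _ hg
  filter_upwards [eventually_ge_atTop 1] with n hn
  have hn0 : (0 : ℝ) < n := by exact_mod_cast hn
  have key : (m n : ℝ) / n - 1 / 2 = (2 * (m n : ℝ) - n) / (2 * n) := by
    field_simp
  rw [Real.norm_eq_abs, key, abs_div, abs_of_pos (by linarith : (0:ℝ) < 2 * n)]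
  have hnum : |2 * (m n : ℝ) - n| ≤ 1 := by
    have h1 := (h n).1
    have h2 := (h n).2
    rw [abs_le]
    constructor
    · have : (n : ℝ) ≤ 2 * m n + 1 := by exact_mod_cast h1
      linarith
    · have : 2 * (m n : ℝ) ≤ n + 1 := by exact_mod_cast h2
      linarith
  rw [div_le_iff₀ (by linarith)]
  calc |2 * (m n : ℝ) - n| ≤ 1 := hnum
    _ = 1 / 2 * (1 / n) * (2 * n) := by field_simp

/-- In `ℝ`, for `A_k = {−1}` if `k` is even and `A_k = {1}` if `k` is
odd, the Cesàro means `(1/n) ∑_{k≤n} d(x, A_k)` converge to `1` on `[−1,1]` and to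
`|x|` off `[−1,1]`, yet `(A_k)` is not Wijsman Cesàro summable to any nonempty
closed set. -/
theorem stmt18 :
    let Aseq : ℕ → Set ℝ := fun k => if Even k then {-1} else {1}
    (∀ x : ℝ, Tendsto (fun n : ℕ => (∑ k ∈ Finset.range n, infDist x (Aseq k)) / (n : ℝ))
        atTop (nhds (if x ∈ Set.Icc (-1 : ℝ) 1 then 1 else |x|))) ∧
      ∀ B : Set ℝ, B.Nonempty → IsClosed B → ¬ WijsmanCesaroTo Aseq B := by
  intro Aseq
  have hdist : ∀ (x : ℝ) (k : ℕ),
      infDist x (Aseq k) = if Even k then |x + 1| else |x - 1| := by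
    intro x k
    by_cases h : Even k <;>
      simp [Aseq, h, Metric.infDist_singleton, Real.dist_eq, sub_neg_eq_add]
  have hmain : ∀ x : ℝ,
      Tendsto (fun n : ℕ => (∑ k ∈ Finset.range n, infDist x (Aseq k)) / (n : ℝ))
        atTop (nhds ((|x + 1| + |x - 1|) / 2)) := by
    intro x
    have hsum : ∀ n : ℕ, (∑ k ∈ Finset.range n, infDist x (Aseq k)) / (n : ℝ)
        = (((n + 1) / 2 : ℕ) : ℝ) / n * |x + 1| + ((n / 2 : ℕ) : ℝ) / n * |x - 1| := by
      intro n
      have : ∑ k ∈ Finset.range n, infDist x (Aseq k)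
          = ∑ k ∈ Finset.range n, (if Even k then |x + 1| else |x - 1|) :=
        Finset.sum_congr rfl fun k _ => hdist x k
      rw [this, aux_sum_ite]
      ring
    have h1 : Tendsto (fun n : ℕ => (((n + 1) / 2 : ℕ) : ℝ) / n) atTop (nhds (1 / 2)) :=
      aux_half_tendsto (fun n => (n + 1) / 2) (fun n => by
        show n ≤ 2 * ((n + 1) / 2) + 1 ∧ 2 * ((n + 1) / 2) ≤ n + 1; omega)
    have h2 : Tendsto (fun n : ℕ => ((n / 2 : ℕ) : ℝ) / n) atTop (nhds (1 / 2)) :=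
      aux_half_tendsto (fun n => n / 2) (fun n => by
        show n ≤ 2 * (n / 2) + 1 ∧ 2 * (n / 2) ≤ n + 1; omega)
    have := (h1.mul_const (|x + 1|)).add (h2.mul_const (|x - 1|))
    have heq : (1 / 2 : ℝ) * |x + 1| + 1 / 2 * |x - 1| = (|x + 1| + |x - 1|) / 2 := by ring
    rw [heq] at this
    exact Tendsto.congr (fun n => (hsum n).symm) this
  have hval : ∀ x : ℝ,
      (|x + 1| + |x - 1|) / 2 = if x ∈ Set.Icc (-1 : ℝ) 1 then 1 else |x| := by
    intro x
    by_cases hx : x ∈ Set.Icc (-1 : ℝ) 1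
    · obtain ⟨h1, h2⟩ := hx
      rw [if_pos ⟨h1, h2⟩, abs_of_nonneg (by linarith), abs_of_nonpos (by linarith)]
      ring
    · rw [if_neg hx]
      rw [Set.mem_Icc, not_and_or, not_le, not_le] at hx
      rcases hx with h | h
      · rw [abs_of_nonpos (by linarith), abs_of_nonpos (by linarith),
          abs_of_neg (by linarith : x < 0)]
        ring
      · rw [abs_of_nonneg (by linarith), abs_of_nonneg (by linarith),
          abs_of_pos (by linarith : (0:ℝ) < x)]
        ring
  constructor
  · intro x
    rw [← hval x]
    exact hmain x
  · intro B hne _hcl hW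
    obtain ⟨b, hb⟩ := hne
    have hlim := hW b
    have huniq : infDist b B = (|b + 1| + |b - 1|) / 2 :=
      tendsto_nhds_unique hlim (hmain b)
    have hz : infDist b B = 0 := infDist_zero_of_mem hb
    have hpos : (1 : ℝ) ≤ (|b + 1| + |b - 1|) / 2 := by
      rw [hval b]
      by_cases hbmem : b ∈ Set.Icc (-1 : ℝ) 1
      · rw [if_pos hbmem]
      · rw [if_neg hbmem]
        rw [Set.mem_Icc, not_and_or, not_le, not_le] at hbmem
        rcases hbmem with h | h
        · rw [abs_of_neg (by linarith : b < 0)]; linarith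
        · rw [abs_of_pos (by linarith : (0:ℝ) < b)]; linarith
    rw [hz] at huniq
    linarith
end

section
/- Let X = [0,∞) with the standard metric, let f(x) = log(1+x), and define A_k ∈ CL(X) by A_k = {k} if k ∈ {2^r : r ∈ ℕ} and A_k = {0} otherwise. Then (A_k) is Wijsman strongly Cesàro summable to {0} with respect to f, i.e., for every x ∈ [0,∞), lim_{n→∞} (1/n) ∑_{k=1}^n log(1 + |d(x,A_k) − d(x,{0})|) = 0, but (A_k) is not Wijsman strongly Cesàro summable to {0}: for every x, lim_{n→∞} (1/n) ∑_{k=1}^n |d(x,A_k) − d(x,{0})| ≠ 0. -/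
open Filter Metric Set
open scoped Classical

/-!
For `x ≥ 0` the `k`-th term `|d(x, A_k) - d(x, {0})| = ||x - k| - x|` vanishes unless `k` is a
power of `2`, and then lies between `k - 2x` and `k`. At most `log₂ n + 1` powers of `2` lie
below `n`, and each contributes at most `log n` to the sum with the modulus `log (1 + ·)`, so those
means are `O((log n)² / n)`. Without the modulus, the single term at `k = 2^r` already makes the
mean at `n = 2^r + 1` close to `1`.
-/

open Topology

theorem card_filter_range_eq_pow_le {b : ℕ} (hb : 1 < b) (n : ℕ) :
    ((Finset.range n).filter (fun k => ∃ r, k = b ^ r)).card ≤ Nat.log b n + 1 := by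
  calc ((Finset.range n).filter (fun k => ∃ r, k = b ^ r)).card
      ≤ ((Finset.range (Nat.log b n + 1)).image (b ^ ·)).card := by
        refine Finset.card_le_card fun k hk => ?_
        obtain ⟨hkn, r, rfl⟩ := Finset.mem_filter.1 hk
        exact Finset.mem_image.2 ⟨r, Finset.mem_range.2
          (Nat.lt_succ_of_le (Nat.le_log_of_pow_le hb (Finset.mem_range.1 hkn).le)), rfl⟩
    _ ≤ Nat.log b n + 1 := Finset.card_image_le.trans (Finset.card_range _).le

theorem Real.tendsto_logb_add_one_mul_log_div_atTop (b : ℝ) :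
    Tendsto (fun x => (Real.logb b x + 1) * Real.log x / x) atTop (𝓝 0) := by
  have hlog2 := Real.tendsto_pow_log_div_mul_add_atTop 1 0 2 one_ne_zero
  have hlog1 := Real.tendsto_pow_log_div_mul_add_atTop 1 0 1 one_ne_zero
  convert (hlog2.mul_const (Real.log b)⁻¹).add hlog1 using 1
  · ext x
    simp only [Real.logb, one_mul, add_zero, pow_one]
    ring
  · simp

theorem tendsto_sum_range_div_of_support_subset_pow {b : ℕ} (hb : 1 < b) {u : ℕ → ℝ}
    (hu_nonneg : ∀ k, 0 ≤ u k) (hu_le : ∀ k, u k ≤ Real.log (k + 1))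
    (hu_supp : ∀ k, (¬ ∃ r, k = b ^ r) → u k = 0) :
    Tendsto (fun n : ℕ => (∑ k ∈ Finset.range n, u k) / n) atTop (𝓝 0) := by
  refine squeeze_zero (fun n => div_nonneg (Finset.sum_nonneg fun k _ => hu_nonneg k)
    n.cast_nonneg) (fun n => ?_)
    ((Real.tendsto_logb_add_one_mul_log_div_atTop b).comp tendsto_natCast_atTop_atTop)
  have hlog_n : 0 ≤ Real.log n := Real.log_natCast_nonneg n
  have hsum : ∑ k ∈ Finset.range n, u k ≤ (Real.logb b n + 1) * Real.log n := by
    rw [← Finset.sum_filter_of_ne fun k _ hk => by_contra fun hP => hk (hu_supp k hP)]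
    calc ∑ k ∈ (Finset.range n).filter (fun k => ∃ r, k = b ^ r), u k
        ≤ ((Finset.range n).filter (fun k => ∃ r, k = b ^ r)).card • Real.log n := by
          refine Finset.sum_le_card_nsmul _ _ _ fun k hk => (hu_le k).trans ?_
          have hkn : k + 1 ≤ n := Finset.mem_range.1 (Finset.mem_filter.1 hk).1
          exact Real.log_le_log (by positivity) (by exact_mod_cast hkn)
      _ ≤ (Real.logb b n + 1) * Real.log n := by
          rw [nsmul_eq_mul]
          gcongr
          calc (_ : ℝ) ≤ Nat.log b n + 1 := by exact_mod_cast card_filter_range_eq_pow_le hb n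
            _ ≤ Real.logb b n + 1 := by gcongr; exact Real.natLog_le_logb n b
  exact div_le_div_of_nonneg_right hsum (Nat.cast_nonneg n)

theorem not_tendsto_sum_range_div_zero_of_frequently {u : ℕ → ℝ} (hu_nonneg : ∀ k, 0 ≤ u k)
    (c : ℝ) (hfreq : ∃ᶠ k : ℕ in atTop, (k : ℝ) - c ≤ u k) :
    ¬ Tendsto (fun n : ℕ => (∑ k ∈ Finset.range n, u k) / n) atTop (𝓝 0) := by
  intro h
  have hmean : ∀ᶠ k : ℕ in atTop, (∑ j ∈ Finset.range (k + 1), u j) / (k + 1 : ℕ) < 1 / 2 :=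
    (tendsto_add_atTop_nat 1).eventually (h.eventually (gt_mem_nhds one_half_pos))
  have hratio : ∀ᶠ k : ℕ in atTop, 1 / 2 < ((k : ℝ) - c) / (k + 1 : ℕ) := by
    have := tendsto_add_mul_div_add_mul_atTop_nhds (-c) 1 1 one_ne_zero
    filter_upwards [this.eventually (lt_mem_nhds (by norm_num : (1 : ℝ) / 2 < 1 / 1))] with k hk
    rwa [show ((k : ℝ) - c) / (k + 1 : ℕ) = (-c + 1 * k) / (1 + 1 * k) by push_cast; ring]
  obtain ⟨k, hk, hk_mean, hk_ratio⟩ := (hfreq.and_eventually (hmean.and hratio)).exists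
  have hk_term : (k : ℝ) - c ≤ ∑ j ∈ Finset.range (k + 1), u j :=
    hk.trans (Finset.single_le_sum (fun j _ => hu_nonneg j) (Finset.self_mem_range_succ k))
  have := div_le_div_of_nonneg_right hk_term (Nat.cast_nonneg (k + 1))
  linarith

theorem abs_abs_sub_sub_le {x : ℝ} (hx : 0 ≤ x) (y : ℝ) : |(|x - y|) - x| ≤ |y| := by
  simpa [abs_of_nonneg hx] using abs_abs_sub_abs_le_abs_sub (x - y) x

theorem sub_two_mul_le_abs_abs_sub_sub (x y : ℝ) : y - 2 * x ≤ |(|x - y|) - x| := by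
  have : y - x ≤ |x - y| := abs_sub_comm y x ▸ le_abs_self (y - x)
  linarith [le_abs_self (|x - y| - x)]

/-- In `X = [0,∞)` with `f(x) = log(1+x)`, the sequence `A_k = {k}`
for `k ∈ {2^r : r ∈ ℕ}` and `A_k = {0}` otherwise is Wijsman strongly Cesàro
summable to `{0}` w.r.t. `f`, but not Wijsman strongly Cesàro summable to `{0}`. -/
theorem stmt19 :
    let X := {x : ℝ // 0 ≤ x}
    let Aseq : ℕ → Set X := fun k =>
      if ∃ r : ℕ, 0 < r ∧ k = 2 ^ r then {⟨(k : ℝ), Nat.cast_nonneg k⟩}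
      else {⟨0, le_refl 0⟩}
    let A : Set X := {⟨0, le_refl 0⟩}
    (∀ x : X, Tendsto (fun n : ℕ =>
        (∑ k ∈ Finset.range n, Real.log (1 + |infDist x (Aseq k) - infDist x A|)) / (n : ℝ))
        atTop (nhds 0)) ∧
    (∀ x : X, ¬ Tendsto (fun n : ℕ =>
        (∑ k ∈ Finset.range n, |infDist x (Aseq k) - infDist x A|) / (n : ℝ))
        atTop (nhds 0)) := by
  intro X Aseq A
  have hdist (x : X) (y : ℝ) (hy : 0 ≤ y) : infDist x {⟨y, hy⟩} = |x.1 - y| := by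
    rw [infDist_singleton, Subtype.dist_eq, Real.dist_eq]
  have hA (x : X) : infDist x A = x.1 := by
    rw [hdist, sub_zero, abs_of_nonneg x.2]
  have hpow (x : X) (k : ℕ) (hk : ∃ r, 0 < r ∧ k = 2 ^ r) :
      |infDist x (Aseq k) - infDist x A| = |(|x.1 - k|) - x.1| := by
    rw [show Aseq k = {⟨k, k.cast_nonneg⟩} from if_pos hk, hdist, hA]
  have hzero (x : X) (k : ℕ) (hk : ¬ ∃ r, 0 < r ∧ k = 2 ^ r) :
      |infDist x (Aseq k) - infDist x A| = 0 := by
    rw [show Aseq k = A from if_neg hk, sub_self, abs_zero]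
  have hle (x : X) (k : ℕ) : |infDist x (Aseq k) - infDist x A| ≤ k := by
    by_cases hk : ∃ r, 0 < r ∧ k = 2 ^ r
    · simpa [hpow x k hk] using abs_abs_sub_sub_le x.2 k
    · simp [hzero x k hk]
  refine ⟨fun x => ?_, fun x => ?_⟩
  · refine tendsto_sum_range_div_of_support_subset_pow one_lt_two
      (fun k => Real.log_nonneg (le_add_of_nonneg_right (abs_nonneg _)))
      (fun k => Real.log_le_log (by positivity) (by linarith [hle x k]))
      (fun k hk => by rw [hzero x k fun ⟨r, _, hr⟩ => hk ⟨r, hr⟩, add_zero, Real.log_one])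
  · refine not_tendsto_sum_range_div_zero_of_frequently (fun k => abs_nonneg _) (2 * x.1)
      (frequently_atTop.2 fun a => ⟨2 ^ (a + 1), ?_, ?_⟩)
    · exact (a.lt_succ_self.trans Nat.lt_two_pow_self).le
    · rw [hpow x _ ⟨a + 1, a.succ_pos, rfl⟩]
      exact sub_two_mul_le_abs_abs_sub_sub _ _
end
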